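/- arXiv:math/0602122 — 4 statements merged into one kernel-verified Lean document; each statement's English description precedes it below -/
import Mathlib

section
/- Let E : B → A be a conditional expectation with a quasi-basis {(x_i, x_i*)}_{i=1}^n and Index E = t, where 1 < t < ∞. Let C* ⟨B, e_A⟩ be the C*-basic construction with Jones projection e_A, Ẽ : C*⟨B,e_A⟩ → B the dual conditional expectation, and F : (1−e_A)C*⟨B,e_A⟩(1−e_A) → A(1−e_A) defined by F(a) = (t/(t−1))(E∘Ẽ)(a)(1−e_A). Then {√(t−1)(1−e_A)x_j e_A x_i(1−e_A), √(t−1)(1−e_A)x_i* e_A x_j*(1−e_A)}_{i,j=1}^n is a quasi-basis for F, and Index F = (t−1)²(1−e_A). -/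
/- Watatani-style conditional expectations, quasi-bases, and the C*-basic
construction, formalized abstractly. -/

noncomputable section

/-- A conditional expectation of a unital C*-algebra `B` onto a C*-subalgebra `A`. -/
structure CondExp (B : Type*) [NormedRing B] [StarRing B] [NormedAlgebra ℂ B] [StarModule ℂ B]
    (A : StarSubalgebra ℂ B) where
  toFun : B →ₗ[ℂ] B
  mem_range : ∀ b, toFun b ∈ A
  fixes : ∀ a ∈ A, toFun a = a
  left_mod : ∀ a ∈ A, ∀ b, toFun (a * b) = a * toFun b
  right_mod : ∀ a ∈ A, ∀ b, toFun (b * a) = toFun b * a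
  star_map : ∀ b, toFun (star b) = star (toFun b)
  pos : ∀ b, ∃ c, toFun (star b * b) = star c * c

/-- `x` is a quasi-basis for the conditional expectation `E` (with pairs `(x i, (x i)*)`). -/
def IsQuasiBasis {B : Type*} [NormedRing B] [StarRing B] [NormedAlgebra ℂ B] [StarModule ℂ B]
    {A : StarSubalgebra ℂ B} (E : CondExp B A) {n : ℕ} (x : Fin n → B) : Prop :=
  (∀ b, ∑ i, x i * E.toFun (star (x i) * b) = b) ∧
  (∀ b, ∑ i, E.toFun (b * x i) * star (x i) = b)

/-- The C*-basic construction `C = C*⟨B, e_A⟩` of a conditional expectation `E : B → A`,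
with Jones projection `e`. -/
structure BasicConstruction {B : Type*} [NormedRing B] [StarRing B] [NormedAlgebra ℂ B] [StarModule ℂ B]
    {A : StarSubalgebra ℂ B} (E : CondExp B A)
    (C : Type*) [NormedRing C] [StarRing C] [NormedAlgebra ℂ C] [StarModule ℂ C] where
  ι : B →⋆ₐ[ℂ] C
  inj : Function.Injective ι
  e : C
  e_star : star e = e
  e_idem : e * e = e
  jones : ∀ b, e * ι b * e = ι (E.toFun b) * e
  dense : (Submodule.span ℂ {y : C | ∃ b c : B, y = ι b * e * ι c}).topologicalClosure = ⊤
  mul_e_inj : ∀ b : B, ι b * e = 0 → b = 0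

set_option linter.unusedSectionVars false

namespace BasicConstruction

variable {B C : Type*} [NormedRing B] [StarRing B] [CStarRing B] [NormedAlgebra ℂ B]
    [StarModule ℂ B] [CompleteSpace B]
    [NormedRing C] [StarRing C] [CStarRing C] [NormedAlgebra ℂ C]
    [StarModule ℂ C] [CompleteSpace C]
    {A : StarSubalgebra ℂ B} {E : CondExp B A}
    (bc : BasicConstruction E C)

theorem ext_right {u v : C}
    (h : ∀ b c : B, u * (bc.ι b * bc.e * bc.ι c) = v * (bc.ι b * bc.e * bc.ι c)) :
    u = v := by
  let M : Submodule ℂ C :=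
  { carrier := {w | u * w = v * w}
    add_mem' := by
      intro a b ha hb
      simp only [Set.mem_setOf_eq] at *
      rw [mul_add, mul_add, ha, hb]
    zero_mem' := by simp
    smul_mem' := by
      intro r a ha
      simp only [Set.mem_setOf_eq] at *
      rw [mul_smul_comm, mul_smul_comm, ha] }
  have hMc : IsClosed (M : Set C) :=
    isClosed_eq (continuous_const.mul continuous_id) (continuous_const.mul continuous_id)
  have hspan : Submodule.span ℂ {y : C | ∃ b c : B, y = bc.ι b * bc.e * bc.ι c} ≤ M := by
    rw [Submodule.span_le]
    rintro y ⟨b, c, rfl⟩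
    exact h b c
  have htop : (⊤ : Submodule ℂ C) ≤ M :=
    bc.dense ▸ Submodule.topologicalClosure_minimal _ hspan hMc
  have h1 : u * 1 = v * 1 := htop (Submodule.mem_top)
  simpa using h1

theorem jones' (b : B) (y : C) :
    bc.e * (bc.ι b * (bc.e * y)) = bc.ι (E.toFun b) * (bc.e * y) := by
  have h := congrArg (· * y) (bc.jones b)
  simpa only [mul_assoc] using h

theorem e_comm {a : B} (ha : a ∈ A) : bc.e * bc.ι a = bc.ι a * bc.e := by
  apply bc.ext_right
  intro b c
  calc bc.e * bc.ι a * (bc.ι b * bc.e * bc.ι c)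
      = bc.e * (bc.ι (a * b) * (bc.e * bc.ι c)) := by simp only [map_mul bc.ι, mul_assoc]
    _ = bc.ι (E.toFun (a * b)) * (bc.e * bc.ι c) := bc.jones' _ _
    _ = bc.ι a * (bc.ι (E.toFun b) * (bc.e * bc.ι c)) := by
        rw [E.left_mod a ha b, map_mul bc.ι, mul_assoc]
    _ = bc.ι a * (bc.e * (bc.ι b * (bc.e * bc.ι c))) := by rw [bc.jones' b (bc.ι c)]
    _ = bc.ι a * bc.e * (bc.ι b * bc.e * bc.ι c) := by simp only [mul_assoc]

theorem e_comm_E (b : B) : bc.e * bc.ι (E.toFun b) = bc.ι (E.toFun b) * bc.e :=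
  bc.e_comm (E.mem_range b)

theorem sum_xe {n : ℕ} (x : Fin n → B) (hx : IsQuasiBasis E x) :
    ∑ k, bc.ι (x k) * bc.e * bc.ι (star (x k)) = 1 := by
  apply bc.ext_right
  intro b c
  rw [Finset.sum_mul, one_mul]
  calc ∑ k, bc.ι (x k) * bc.e * bc.ι (star (x k)) * (bc.ι b * bc.e * bc.ι c)
      = ∑ k, bc.ι (x k) * (bc.e * (bc.ι (star (x k) * b) * (bc.e * bc.ι c))) := by
        refine Finset.sum_congr rfl fun k _ => ?_
        simp only [map_mul bc.ι, mul_assoc]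
    _ = ∑ k, bc.ι (x k * E.toFun (star (x k) * b)) * (bc.e * bc.ι c) := by
        refine Finset.sum_congr rfl fun k _ => ?_
        rw [bc.jones', map_mul bc.ι, mul_assoc]
    _ = bc.ι (∑ k, x k * E.toFun (star (x k) * b)) * (bc.e * bc.ι c) := by
        rw [map_sum, Finset.sum_mul]
    _ = bc.ι b * bc.e * bc.ι c := by rw [hx.1 b, mul_assoc]
theorem corner (z : C) : ∃ b : B, bc.e * z * bc.e = bc.ι b * bc.e := by
  letI : CStarAlgebra B := ⟨⟩
  letI : CStarAlgebra C := ⟨⟩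
  have hι : Isometry bc.ι := NonUnitalStarAlgHom.isometry bc.ι bc.inj
  set Abar := A.topologicalClosure with hAbar
  haveI hclosed : IsClosed (Abar : Set B) := A.isClosed_topologicalClosure
  have hcomm : ∀ a : B, a ∈ Abar → bc.e * bc.ι a = bc.ι a * bc.e := by
    intro a ha
    have hsub : (A : Set B) ⊆ {b : B | bc.e * bc.ι b = bc.ι b * bc.e} :=
      fun a' ha' => bc.e_comm ha'
    have hcl : IsClosed {b : B | bc.e * bc.ι b = bc.ι b * bc.e} :=
      isClosed_eq ((continuous_mul_left bc.e).comp hι.continuous)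
        ((continuous_mul_right bc.e).comp hι.continuous)
    have : (Abar : Set B) ⊆ {b : B | bc.e * bc.ι b = bc.ι b * bc.e} := by
      rw [hAbar, StarSubalgebra.topologicalClosure]
      exact closure_minimal hsub hcl
    exact this ha
  let ψ : Abar →⋆ₙₐ[ℂ] C :=
  { toFun := fun a => bc.ι a * bc.e
    map_smul' := by
      intro r a
      simp only [SetLike.val_smul, map_smul, smul_mul_assoc]
      rfl
    map_zero' := by simp
    map_add' := by
      intro a b
      push_cast
      rw [map_add, add_mul]
    map_mul' := by
      intro a b
      push_cast
      rw [map_mul, mul_assoc, ← hcomm b b.2, ← mul_assoc, ← mul_assoc, mul_assoc _ bc.e bc.e,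
        bc.e_idem]
    map_star' := by
      intro a
      show bc.ι ↑(star a) * bc.e = star ((bc.ι ↑a) * bc.e)
      rw [star_mul, bc.e_star, ← map_star bc.ι, hcomm _ (star_mem a.2)]
      rfl }
  have hψ : ∀ a : Abar, ψ a = bc.ι a * bc.e := fun a => rfl
  have hinj : Function.Injective ψ := by
    intro a b hab
    rw [hψ, hψ] at hab
    have : bc.ι ((a : B) - (b : B)) * bc.e = 0 := by
      rw [map_sub, sub_mul, hab, sub_self]
    have := bc.mul_e_inj _ this
    exact Subtype.ext (sub_eq_zero.mp this)
  have hiso : Isometry ψ := NonUnitalStarAlgHom.isometry ψ hinj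
  have hrange : IsClosed (Set.range ψ) := hiso.isClosedEmbedding.isClosed_range
  let M : Submodule ℂ C :=
  { carrier := {w : C | bc.e * w * bc.e ∈ Set.range ψ}
    add_mem' := by
      rintro a b ⟨p, hp⟩ ⟨q, hq⟩
      exact ⟨p + q, by rw [map_add, hp, hq, mul_add, add_mul]⟩
    zero_mem' := ⟨0, by simp⟩
    smul_mem' := by
      rintro r a ⟨p, hp⟩
      exact ⟨r • p, by rw [map_smul, hp, mul_smul_comm, smul_mul_assoc]⟩ }
  have hMc : IsClosed (M : Set C) :=
    hrange.preimage ((continuous_mul_right bc.e).comp (continuous_mul_left bc.e))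
  have hspan : Submodule.span ℂ {y : C | ∃ b c : B, y = bc.ι b * bc.e * bc.ι c} ≤ M := by
    rw [Submodule.span_le]
    rintro y ⟨b, c, rfl⟩
    refine ⟨⟨E.toFun b * E.toFun c,
      mul_mem (A.le_topologicalClosure (E.mem_range b))
        (A.le_topologicalClosure (E.mem_range c))⟩, ?_⟩
    rw [hψ]
    calc bc.ι (E.toFun b * E.toFun c) * bc.e
        = bc.ι (E.toFun b) * (bc.ι (E.toFun c) * bc.e) := by rw [map_mul bc.ι, mul_assoc]
      _ = bc.ι (E.toFun b) * (bc.e * (bc.ι c * bc.e)) := by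
          rw [← bc.jones c, mul_assoc]
      _ = bc.e * (bc.ι b * bc.e * bc.ι c) * bc.e := by
          rw [← bc.jones' b]
          simp only [mul_assoc]
  have htop : (⊤ : Submodule ℂ C) ≤ M :=
    bc.dense ▸ Submodule.topologicalClosure_minimal _ hspan hMc
  obtain ⟨⟨b, hb⟩, hab⟩ := htop (Submodule.mem_top : z ∈ ⊤)
  exact ⟨b, hab.symm⟩

theorem corner' (z : C) : ∃ b : B, bc.e * z * bc.e = bc.e * bc.ι b := by
  obtain ⟨b, hb⟩ := bc.corner (star z)
  refine ⟨star b, ?_⟩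
  have h := congrArg star hb
  rw [star_mul, star_mul, star_mul, bc.e_star, star_star, ← map_star bc.ι] at h
  rw [← mul_assoc] at h
  exact h

theorem dec_left {n : ℕ} (x : Fin n → B) (hx : IsQuasiBasis E x) (w : C) :
    ∃ h : Fin n → Fin n → B,
      w = ∑ k, ∑ l, bc.ι (h k l) * bc.e * bc.ι (star (x k)) := by
  choose g hg using fun z : C => bc.corner z
  refine ⟨fun k l => x l * g (bc.ι (star (x l)) * w * bc.ι (x k)), ?_⟩
  calc w = (∑ l, bc.ι (x l) * bc.e * bc.ι (star (x l))) * w *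
        (∑ k, bc.ι (x k) * bc.e * bc.ι (star (x k))) := by
        rw [bc.sum_xe x hx, one_mul, mul_one]
    _ = ∑ k, (∑ l, bc.ι (x l) * bc.e * bc.ι (star (x l))) * w *
        (bc.ι (x k) * bc.e * bc.ι (star (x k))) := by rw [Finset.mul_sum]
    _ = ∑ k, ∑ l, (bc.ι (x l) * bc.e * bc.ι (star (x l))) * w *
        (bc.ι (x k) * bc.e * bc.ι (star (x k))) := by
        refine Finset.sum_congr rfl fun k _ => ?_
        rw [Finset.sum_mul, Finset.sum_mul]
    _ = ∑ k, ∑ l, bc.ι (x l * g (bc.ι (star (x l)) * w * bc.ι (x k))) * bc.e *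
        bc.ι (star (x k)) := by
        refine Finset.sum_congr rfl fun k _ => Finset.sum_congr rfl fun l _ => ?_
        have h1 := congrArg (· * bc.ι (star (x k)))
          (hg (bc.ι (star (x l)) * w * bc.ι (x k)))
        simp only [mul_assoc] at h1 ⊢
        rw [map_mul bc.ι, mul_assoc, h1]

theorem dec_right {n : ℕ} (x : Fin n → B) (hx : IsQuasiBasis E x) (w : C) :
    ∃ h : Fin n → Fin n → B,
      w = ∑ k, ∑ l, bc.ι (x k) * bc.e * bc.ι (h k l) := by
  choose g hg using fun z : C => bc.corner' z
  refine ⟨fun k l => g (bc.ι (star (x k)) * w * bc.ι (x l)) * star (x l), ?_⟩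
  calc w = (∑ k, bc.ι (x k) * bc.e * bc.ι (star (x k))) * w *
        (∑ l, bc.ι (x l) * bc.e * bc.ι (star (x l))) := by
        rw [bc.sum_xe x hx, one_mul, mul_one]
    _ = ∑ k, bc.ι (x k) * bc.e * bc.ι (star (x k)) * w *
        (∑ l, bc.ι (x l) * bc.e * bc.ι (star (x l))) := by
        rw [Finset.sum_mul, Finset.sum_mul]
    _ = ∑ k, ∑ l, bc.ι (x k) * bc.e * bc.ι (star (x k)) * w *
        (bc.ι (x l) * bc.e * bc.ι (star (x l))) := by
        refine Finset.sum_congr rfl fun k _ => ?_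
        rw [Finset.mul_sum]
    _ = ∑ k, ∑ l, bc.ι (x k) * bc.e *
        bc.ι (g (bc.ι (star (x k)) * w * bc.ι (x l)) * star (x l)) := by
        refine Finset.sum_congr rfl fun k _ => Finset.sum_congr rfl fun l _ => ?_
        have h1 := congrArg (· * bc.ι (star (x l)))
          (hg (bc.ι (star (x k)) * w * bc.ι (x l)))
        simp only [mul_assoc] at h1 ⊢
        rw [map_mul bc.ι, h1]

end BasicConstruction
section Sums

variable {B : Type*} [NormedRing B] [StarRing B] [NormedAlgebra ℂ B] [StarModule ℂ B]
    {A : StarSubalgebra ℂ B} (E : CondExp B A)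
    {n : ℕ} (x : Fin n → B)

theorem CondExp.key1 (hx : IsQuasiBasis E x) : ∑ i, x i * E.toFun (star (x i)) = 1 := by
  simpa using hx.1 1

theorem CondExp.key2 (hx : IsQuasiBasis E x) : ∑ i, E.toFun (x i) * star (x i) = 1 := by
  simpa using hx.2 1

theorem CondExp.key3 (hx : IsQuasiBasis E x) : ∑ i, E.toFun (x i) * E.toFun (star (x i)) = 1 := by
  calc ∑ i, E.toFun (x i) * E.toFun (star (x i))
      = ∑ i, E.toFun (E.toFun (x i) * star (x i)) :=
        Finset.sum_congr rfl fun i _ => (E.left_mod _ (E.mem_range _) _).symm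
    _ = E.toFun (∑ i, E.toFun (x i) * star (x i)) := (map_sum E.toFun _ _).symm
    _ = 1 := by rw [E.key2 x hx]; exact E.fixes 1 (one_mem A)

theorem CondExp.sum_m_E (hx : IsQuasiBasis E x) (b : B) :
    ∑ i, (x i - E.toFun (x i)) * E.toFun (star (x i - E.toFun (x i)) * b)
      = b - E.toFun b := by
  have key4 : ∑ i, E.toFun (x i) * E.toFun (star (x i) * b) = E.toFun b := by
    calc ∑ i, E.toFun (x i) * E.toFun (star (x i) * b)
        = ∑ i, E.toFun (E.toFun (x i) * (star (x i) * b)) :=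
          Finset.sum_congr rfl fun i _ => (E.left_mod _ (E.mem_range _) _).symm
      _ = E.toFun (∑ i, E.toFun (x i) * star (x i) * b) := by
          rw [← map_sum]
          exact congrArg _ (Finset.sum_congr rfl fun i _ => by rw [mul_assoc])
      _ = E.toFun b := by rw [← Finset.sum_mul, E.key2 x hx, one_mul]
  have expand : ∀ i, (x i - E.toFun (x i)) * E.toFun (star (x i - E.toFun (x i)) * b)
      = x i * E.toFun (star (x i) * b) - x i * E.toFun (star (x i)) * E.toFun b
        - E.toFun (x i) * E.toFun (star (x i) * b)
        + E.toFun (x i) * E.toFun (star (x i)) * E.toFun b := by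
    intro i
    have hstar : star (x i - E.toFun (x i)) = star (x i) - E.toFun (star (x i)) := by
      rw [star_sub, E.star_map]
    rw [hstar, sub_mul, sub_mul, map_sub, E.left_mod _ (E.mem_range (star (x i))) b]
    noncomm_ring
  rw [Finset.sum_congr rfl fun i _ => expand i]
  rw [Finset.sum_add_distrib, Finset.sum_sub_distrib, Finset.sum_sub_distrib,
    ← Finset.sum_mul, ← Finset.sum_mul, hx.1 b, E.key1 x hx, E.key3 x hx, key4, one_mul]
  abel

theorem CondExp.sum_E_m (hx : IsQuasiBasis E x) (b : B) :
    ∑ i, E.toFun (b * (x i - E.toFun (x i))) * star (x i - E.toFun (x i))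
      = b - E.toFun b := by
  have key4 : ∑ i, E.toFun (b * x i) * E.toFun (star (x i)) = E.toFun b := by
    calc ∑ i, E.toFun (b * x i) * E.toFun (star (x i))
        = ∑ i, E.toFun (E.toFun (b * x i) * star (x i)) :=
          Finset.sum_congr rfl fun i _ => (E.left_mod _ (E.mem_range _) _).symm
      _ = E.toFun (∑ i, E.toFun (b * x i) * star (x i)) := (map_sum E.toFun _ _).symm
      _ = E.toFun b := by rw [hx.2 b]
  have key5 : ∑ i, E.toFun b * E.toFun (x i) * star (x i) = E.toFun b := by
    calc ∑ i, E.toFun b * E.toFun (x i) * star (x i)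
        = E.toFun b * ∑ i, E.toFun (x i) * star (x i) := by
          rw [Finset.mul_sum]
          exact Finset.sum_congr rfl fun i _ => by rw [mul_assoc]
      _ = E.toFun b := by rw [E.key2 x hx, mul_one]
  have key6 : ∑ i, E.toFun b * (E.toFun (x i) * E.toFun (star (x i))) = E.toFun b := by
    rw [← Finset.mul_sum, E.key3 x hx, mul_one]
  have expand : ∀ i, E.toFun (b * (x i - E.toFun (x i))) * star (x i - E.toFun (x i))
      = E.toFun (b * x i) * star (x i) - E.toFun (b * x i) * E.toFun (star (x i))
        - E.toFun b * E.toFun (x i) * star (x i)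
        + E.toFun b * (E.toFun (x i) * E.toFun (star (x i))) := by
    intro i
    have hstar : star (x i - E.toFun (x i)) = star (x i) - E.toFun (star (x i)) := by
      rw [star_sub, E.star_map]
    rw [hstar, mul_sub, mul_sub, map_sub, E.right_mod _ (E.mem_range (x i)) b]
    noncomm_ring
  rw [Finset.sum_congr rfl fun i _ => expand i]
  rw [Finset.sum_add_distrib, Finset.sum_sub_distrib, Finset.sum_sub_distrib,
    hx.2 b, key4, key5, key6]
  abel

end Sums
section Meme

variable {B C : Type*} [NormedRing B] [StarRing B] [CStarRing B] [NormedAlgebra ℂ B]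
    [StarModule ℂ B] [CompleteSpace B]
    [NormedRing C] [StarRing C] [CStarRing C] [NormedAlgebra ℂ C]
    [StarModule ℂ C] [CompleteSpace C]
    {A : StarSubalgebra ℂ B} {E : CondExp B A}
    (bc : BasicConstruction E C)

theorem CondExp.sum_mm {n : ℕ} (x : Fin n → B) (hx : IsQuasiBasis E x) {t : ℝ}
    (hidx : ∑ i, x i * star (x i) = (t : ℂ) • (1 : B)) :
    ∑ i, (x i - E.toFun (x i)) * star (x i - E.toFun (x i)) = (t : ℂ) • (1 : B) - 1 := by
  have expand : ∀ i, (x i - E.toFun (x i)) * star (x i - E.toFun (x i))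
      = x i * star (x i) - x i * E.toFun (star (x i)) - E.toFun (x i) * star (x i)
        + E.toFun (x i) * E.toFun (star (x i)) := by
    intro i
    have hstar : star (x i - E.toFun (x i)) = star (x i) - E.toFun (star (x i)) := by
      rw [star_sub, E.star_map]
    rw [hstar]
    noncomm_ring
  rw [Finset.sum_congr rfl fun i _ => expand i]
  rw [Finset.sum_add_distrib, Finset.sum_sub_distrib, Finset.sum_sub_distrib,
    hidx, E.key1 x hx, E.key2 x hx, E.key3 x hx]
  abel

theorem BasicConstruction.sum_meme {n : ℕ} (x : Fin n → B) (hx : IsQuasiBasis E x) :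
    ∑ j, bc.ι (x j - E.toFun (x j)) * bc.e * bc.ι (star (x j - E.toFun (x j)))
      = 1 - bc.e := by
  have expand : ∀ j, bc.ι (x j - E.toFun (x j)) * bc.e * bc.ι (star (x j - E.toFun (x j)))
      = bc.ι (x j) * bc.e * bc.ι (star (x j)) - bc.ι (x j * E.toFun (star (x j))) * bc.e
        - bc.e * bc.ι (E.toFun (x j) * star (x j))
        + bc.ι (E.toFun (x j) * E.toFun (star (x j))) * bc.e := by
    intro j
    have hstar : star (x j - E.toFun (x j)) = star (x j) - E.toFun (star (x j)) := by
      rw [star_sub, E.star_map]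
    have h2 : bc.ι (x j) * bc.e * bc.ι (E.toFun (star (x j)))
        = bc.ι (x j * E.toFun (star (x j))) * bc.e := by
      rw [mul_assoc, bc.e_comm_E, ← mul_assoc, ← map_mul bc.ι]
    have h3 : bc.ι (E.toFun (x j)) * bc.e * bc.ι (star (x j))
        = bc.e * bc.ι (E.toFun (x j) * star (x j)) := by
      rw [← bc.e_comm_E, mul_assoc, ← map_mul bc.ι]
    have h4 : bc.ι (E.toFun (x j)) * bc.e * bc.ι (E.toFun (star (x j)))
        = bc.ι (E.toFun (x j) * E.toFun (star (x j))) * bc.e := by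
      rw [mul_assoc, bc.e_comm_E, ← mul_assoc, ← map_mul bc.ι]
    rw [hstar, map_sub bc.ι, map_sub bc.ι, sub_mul, sub_mul, mul_sub, mul_sub, h2, h3, h4]
    abel
  rw [Finset.sum_congr rfl fun j _ => expand j]
  rw [Finset.sum_add_distrib, Finset.sum_sub_distrib, Finset.sum_sub_distrib,
    bc.sum_xe x hx, ← Finset.sum_mul, ← map_sum bc.ι, E.key1 x hx,
    ← Finset.mul_sum, ← map_sum bc.ι, E.key2 x hx,
    ← Finset.sum_mul, ← map_sum bc.ι, E.key3 x hx, map_one, one_mul, mul_one]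
  abel

end Meme


/-- the quasi-basis and index of the conditional expectation
`F(a) = (t/(t-1))·(E ∘ Ẽ)(a)(1−e_A)` on the corner `(1−e_A)C*⟨B,e_A⟩(1−e_A)`. -/
theorem corner_quasiBasis_and_index
    {B C : Type*} [NormedRing B] [StarRing B] [CStarRing B] [NormedAlgebra ℂ B]
    [StarModule ℂ B] [CompleteSpace B]
    [NormedRing C] [StarRing C] [CStarRing C] [NormedAlgebra ℂ C]
    [StarModule ℂ C] [CompleteSpace C]
    {A : StarSubalgebra ℂ B} (E : CondExp B A)
    (t : ℝ) (ht : 1 < t)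
    {n : ℕ} (x : Fin n → B) (hx : IsQuasiBasis E x)
    (hidx : ∑ i, x i * star (x i) = (t : ℂ) • (1 : B))
    (bc : BasicConstruction E C)
    -- the dual conditional expectation Ẽ : C*⟨B,e_A⟩ → B, Ẽ(b e_A c) = (1/t) b c
    (Et : C →ₗ[ℂ] B)
    (hEt : ∀ b c : B, Et (bc.ι b * bc.e * bc.ι c) = ((t : ℂ))⁻¹ • (b * c))
    -- the conditional expectation F of the corner onto A(1-e_A)
    (F : C → C)
    (hF : ∀ y : C, F y =
      ((t / (t - 1) : ℝ) : ℂ) • (bc.ι (E.toFun (Et y)) * (1 - bc.e)))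
    -- the candidate quasi-basis √(t−1)(1−e_A) x_j e_A x_i (1−e_A)
    (u : Fin n × Fin n → C)
    (hu : ∀ p, u p = ((Real.sqrt (t - 1) : ℝ) : ℂ) •
      ((1 - bc.e) * bc.ι (x p.2) * bc.e * bc.ι (x p.1) * (1 - bc.e))) :
    (∀ c : C,
      ∑ p, u p * F (star (u p) * ((1 - bc.e) * c * (1 - bc.e)))
        = (1 - bc.e) * c * (1 - bc.e)) ∧
    (∀ c : C,
      ∑ p, F (((1 - bc.e) * c * (1 - bc.e)) * u p) * star (u p)
        = (1 - bc.e) * c * (1 - bc.e)) ∧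
    ∑ p, u p * star (u p) = (((t - 1) ^ 2 : ℝ) : ℂ) • (1 - bc.e) := by
  have hs : (0:ℝ) < t - 1 := by linarith
  have ht0 : t ≠ 0 := by linarith
  have hs0 : t - 1 ≠ 0 := ne_of_gt hs
  have hsqrt : Real.sqrt (t-1) * Real.sqrt (t-1) = t - 1 := Real.mul_self_sqrt hs.le
  have hscal : ((Real.sqrt (t-1) : ℝ) : ℂ) * ((t / (t - 1) : ℝ) : ℂ) *
      ((Real.sqrt (t-1) : ℝ) : ℂ) * ((t:ℂ))⁻¹ = 1 := by
    have hr : Real.sqrt (t-1) * (t / (t-1)) * Real.sqrt (t-1) * t⁻¹ = 1 := by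
      have h4 : Real.sqrt (t-1) * (t / (t-1)) * Real.sqrt (t-1) * t⁻¹
          = (Real.sqrt (t-1) * Real.sqrt (t-1)) * (t / (t-1)) * t⁻¹ := by ring
      rw [h4, hsqrt]
      field_simp
    calc ((Real.sqrt (t-1) : ℝ) : ℂ) * ((t / (t - 1) : ℝ) : ℂ) *
        ((Real.sqrt (t-1) : ℝ) : ℂ) * ((t:ℂ))⁻¹
        = ((Real.sqrt (t-1) * (t / (t-1)) * Real.sqrt (t-1) * t⁻¹ : ℝ) : ℂ) := by
          push_cast
          ring
      _ = 1 := by rw [hr]; norm_num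
  have hscal2 : ((t / (t - 1) : ℝ) : ℂ) * ((Real.sqrt (t-1) : ℝ) : ℂ) * ((t:ℂ))⁻¹ *
      ((Real.sqrt (t-1) : ℝ) : ℂ) = 1 := by
    rw [← hscal]
    ring
  have hef : bc.e * (1 - bc.e) = 0 := by rw [mul_sub, mul_one, bc.e_idem, sub_self]
  have hfe : (1 - bc.e) * bc.e = 0 := by rw [sub_mul, one_mul, bc.e_idem, sub_self]
  have hff : (1 - bc.e) * (1 - bc.e) = 1 - bc.e := by rw [mul_sub, mul_one, hfe, sub_zero]
  have hu' : ∀ p : Fin n × Fin n, u p = ((Real.sqrt (t - 1) : ℝ) : ℂ) •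
      (bc.ι (x p.2 - E.toFun (x p.2)) * bc.e * bc.ι (x p.1 - E.toFun (x p.1))) := by
    intro p
    rw [hu p]
    congr 1
    have hfxe : (1 - bc.e) * bc.ι (x p.2) * bc.e = bc.ι (x p.2 - E.toFun (x p.2)) * bc.e := by
      rw [sub_mul, one_mul, sub_mul, bc.jones, map_sub bc.ι, sub_mul]
    have hexf : bc.e * (bc.ι (x p.1) * (1 - bc.e)) = bc.e * bc.ι (x p.1 - E.toFun (x p.1)) := by
      rw [mul_sub, mul_one, mul_sub, ← mul_assoc, bc.jones, ← bc.e_comm_E, ← mul_sub,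
        ← map_sub bc.ι]
    calc (1 - bc.e) * bc.ι (x p.2) * bc.e * bc.ι (x p.1) * (1 - bc.e)
        = (1 - bc.e) * bc.ι (x p.2) * bc.e * (bc.ι (x p.1) * (1 - bc.e)) := by
          rw [mul_assoc]
      _ = bc.ι (x p.2 - E.toFun (x p.2)) * bc.e * (bc.ι (x p.1) * (1 - bc.e)) := by
          rw [hfxe]
      _ = bc.ι (x p.2 - E.toFun (x p.2)) * bc.e * bc.ι (x p.1 - E.toFun (x p.1)) := by
          rw [mul_assoc, hexf, ← mul_assoc]
  have hustar : ∀ p : Fin n × Fin n, star (u p) = ((Real.sqrt (t - 1) : ℝ) : ℂ) •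
      (bc.ι (star (x p.1 - E.toFun (x p.1))) * bc.e * bc.ι (star (x p.2 - E.toFun (x p.2)))) := by
    intro p
    rw [hu' p, star_smul, Complex.star_def, Complex.conj_ofReal]
    congr 1
    simp only [star_mul, bc.e_star, ← map_star bc.ι, mul_assoc]
  have hEms : ∀ i, E.toFun (star (x i - E.toFun (x i))) = 0 := by
    intro i
    rw [star_sub, ← E.star_map, map_sub, E.fixes _ (E.mem_range _), sub_self]
  refine ⟨?_, ?_, ?_⟩
  · -- Claim 1
    intro c
    set z : C := (1 - bc.e) * c * (1 - bc.e) with hz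
    have hzf : z * (1 - bc.e) = z := by
      conv_lhs => rw [hz]
      rw [mul_assoc, hff, ← hz]
    have hfz : (1 - bc.e) * z = z := by
      conv_lhs => rw [hz]
      rw [← mul_assoc, ← mul_assoc, hff, ← hz]
    choose h hh using fun j : Fin n => bc.dec_left x hx (bc.ι (star (x j - E.toFun (x j))) * z)
    have tl : ∀ (d : B) (k : Fin n), bc.e * (bc.ι d * bc.e * bc.ι (star (x k)))
        = bc.ι (E.toFun d) * bc.e * bc.ι (star (x k)) := by
      intro d k
      rw [← mul_assoc, ← mul_assoc, bc.jones]
    have tl2 : ∀ (d : B) (k : Fin n), bc.e * bc.ι (E.toFun d * star (x k))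
        = bc.ι (E.toFun d) * bc.e * bc.ι (star (x k)) := by
      intro d k
      rw [map_mul bc.ι, ← mul_assoc, bc.e_comm_E]
    have heq : ∀ j, bc.e * bc.ι (∑ k, ∑ l, E.toFun (h j k l) * star (x k))
        = bc.e * (bc.ι (star (x j - E.toFun (x j))) * z) := by
      intro j
      conv_rhs => rw [hh j]
      simp only [map_sum, Finset.mul_sum]
      exact Finset.sum_congr rfl fun k _ => Finset.sum_congr rfl fun l _ => by
        rw [tl2, ← tl]
    have tm : ∀ (a d : B) (k : Fin n), (bc.ι a * bc.e) * (bc.ι d * bc.e * bc.ι (star (x k)))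
        = bc.ι (a * E.toFun d) * bc.e * bc.ι (star (x k)) := by
      intro a d k
      rw [mul_assoc, tl d k, map_mul bc.ι]
      simp only [mul_assoc]
    have harg : ∀ p : Fin n × Fin n, star (u p) * z = ((Real.sqrt (t - 1) : ℝ) : ℂ) •
        ∑ k, ∑ l, bc.ι (star (x p.1 - E.toFun (x p.1)) * E.toFun (h p.2 k l)) * bc.e *
          bc.ι (star (x k)) := by
      intro p
      rw [hustar p, smul_mul_assoc]
      congr 1
      calc bc.ι (star (x p.1 - E.toFun (x p.1))) * bc.e * bc.ι (star (x p.2 - E.toFun (x p.2))) * z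
          = (bc.ι (star (x p.1 - E.toFun (x p.1))) * bc.e) *
            (bc.ι (star (x p.2 - E.toFun (x p.2))) * z) := by
            simp only [mul_assoc]
        _ = (bc.ι (star (x p.1 - E.toFun (x p.1))) * bc.e) *
            ∑ k, ∑ l, bc.ι (h p.2 k l) * bc.e * bc.ι (star (x k)) := by rw [hh p.2]
        _ = ∑ k, ∑ l, bc.ι (star (x p.1 - E.toFun (x p.1)) * E.toFun (h p.2 k l)) * bc.e *
            bc.ι (star (x k)) := by
            simp only [Finset.mul_sum]
            exact Finset.sum_congr rfl fun k _ => Finset.sum_congr rfl fun l _ => tm _ _ k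
    have hT : ∀ p : Fin n × Fin n, u p * F (star (u p) * z)
        = bc.ι (x p.2 - E.toFun (x p.2)) * bc.e *
          bc.ι ((x p.1 - E.toFun (x p.1)) * E.toFun (star (x p.1 - E.toFun (x p.1)) *
            ∑ k, ∑ l, E.toFun (h p.2 k l) * star (x k))) * (1 - bc.e) := by
      intro p
      have hEt1 : Et (star (u p) * z) = ((Real.sqrt (t - 1) : ℝ) : ℂ) • ((t:ℂ))⁻¹ •
          (star (x p.1 - E.toFun (x p.1)) * ∑ k, ∑ l, E.toFun (h p.2 k l) * star (x k)) := by
        rw [harg p, map_smul]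
        congr 1
        calc Et (∑ k, ∑ l, bc.ι (star (x p.1 - E.toFun (x p.1)) * E.toFun (h p.2 k l)) * bc.e *
              bc.ι (star (x k)))
            = ∑ k, ∑ l, ((t:ℂ))⁻¹ • (star (x p.1 - E.toFun (x p.1)) *
                (E.toFun (h p.2 k l) * star (x k))) := by
              rw [map_sum]
              exact Finset.sum_congr rfl fun k _ => by
                rw [map_sum]
                exact Finset.sum_congr rfl fun l _ => by rw [hEt, mul_assoc]
          _ = ((t:ℂ))⁻¹ • (star (x p.1 - E.toFun (x p.1)) *
                ∑ k, ∑ l, E.toFun (h p.2 k l) * star (x k)) := by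
              rw [Finset.mul_sum, Finset.smul_sum]
              exact Finset.sum_congr rfl fun k _ => by rw [Finset.mul_sum, Finset.smul_sum]
      rw [hF, hEt1, map_smul E.toFun, map_smul E.toFun, map_smul bc.ι, map_smul bc.ι, hu' p,
        smul_mul_assoc, smul_mul_assoc, smul_mul_assoc,
        mul_smul_comm, mul_smul_comm, mul_smul_comm,
        smul_smul, smul_smul, smul_smul, hscal, one_smul, map_mul bc.ι]
      simp only [mul_assoc]
    calc ∑ p : Fin n × Fin n, u p * F (star (u p) * z)
        = ∑ p : Fin n × Fin n, bc.ι (x p.2 - E.toFun (x p.2)) * bc.e *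
            bc.ι ((x p.1 - E.toFun (x p.1)) * E.toFun (star (x p.1 - E.toFun (x p.1)) *
              ∑ k, ∑ l, E.toFun (h p.2 k l) * star (x k))) * (1 - bc.e) :=
          Finset.sum_congr rfl fun p _ => hT p
      _ = ∑ i, ∑ j, bc.ι (x j - E.toFun (x j)) * bc.e *
            bc.ι ((x i - E.toFun (x i)) * E.toFun (star (x i - E.toFun (x i)) *
              ∑ k, ∑ l, E.toFun (h j k l) * star (x k))) * (1 - bc.e) := by
          rw [Fintype.sum_prod_type]
      _ = ∑ j, ∑ i, bc.ι (x j - E.toFun (x j)) * bc.e *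
            bc.ι ((x i - E.toFun (x i)) * E.toFun (star (x i - E.toFun (x i)) *
              ∑ k, ∑ l, E.toFun (h j k l) * star (x k))) * (1 - bc.e) := Finset.sum_comm
      _ = ∑ j, bc.ι (x j - E.toFun (x j)) * bc.e *
            bc.ι (∑ i, (x i - E.toFun (x i)) * E.toFun (star (x i - E.toFun (x i)) *
              (∑ k, ∑ l, E.toFun (h j k l) * star (x k)))) * (1 - bc.e) := by
          refine Finset.sum_congr rfl fun j _ => ?_
          rw [map_sum bc.ι, Finset.mul_sum, Finset.sum_mul]
      _ = ∑ j, bc.ι (x j - E.toFun (x j)) * bc.e *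
            bc.ι ((∑ k, ∑ l, E.toFun (h j k l) * star (x k)) -
              E.toFun (∑ k, ∑ l, E.toFun (h j k l) * star (x k))) * (1 - bc.e) := by
          refine Finset.sum_congr rfl fun j _ => ?_
          rw [E.sum_m_E x hx _]
      _ = ∑ j, (bc.ι (x j - E.toFun (x j)) * bc.e * bc.ι (star (x j - E.toFun (x j)))) * z := by
          refine Finset.sum_congr rfl fun j _ => ?_
          have hzero : bc.ι (x j - E.toFun (x j)) * bc.e *
              bc.ι (E.toFun (∑ k, ∑ l, E.toFun (h j k l) * star (x k))) * (1 - bc.e) = 0 := by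
            simp only [mul_assoc]
            rw [← mul_assoc bc.e, bc.e_comm_E, mul_assoc, hef, mul_zero, mul_zero]
          have hfirst : bc.ι (x j - E.toFun (x j)) * bc.e *
              bc.ι (∑ k, ∑ l, E.toFun (h j k l) * star (x k)) * (1 - bc.e)
              = (bc.ι (x j - E.toFun (x j)) * bc.e * bc.ι (star (x j - E.toFun (x j)))) * z := by
            rw [mul_assoc (bc.ι (x j - E.toFun (x j))) bc.e, heq j]
            simp only [mul_assoc]
            rw [hzf]
          rw [map_sub bc.ι (∑ k, ∑ l, E.toFun (h j k l) * star (x k))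
              (E.toFun (∑ k, ∑ l, E.toFun (h j k l) * star (x k))),
            mul_sub (bc.ι (x j - E.toFun (x j)) * bc.e), sub_mul, hzero, sub_zero, hfirst]
      _ = (1 - bc.e) * z := by rw [← Finset.sum_mul, bc.sum_meme x hx]
      _ = z := hfz
  · -- Claim 2
    intro c
    set z : C := (1 - bc.e) * c * (1 - bc.e) with hz
    have hzf : z * (1 - bc.e) = z := by
      conv_lhs => rw [hz]
      rw [mul_assoc, hff, ← hz]
    have hez : bc.e * z = 0 := by
      conv_lhs => rw [hz]
      rw [← mul_assoc, ← mul_assoc, hef, zero_mul, zero_mul]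
    choose h hh using fun j : Fin n => bc.dec_right x hx (z * bc.ι (x j - E.toFun (x j)))
    have tr : ∀ (d : B) (k : Fin n), bc.ι (x k) * bc.e * bc.ι d * bc.e
        = bc.ι (x k * E.toFun d) * bc.e := by
      intro d k
      have hj : bc.e * (bc.ι d * bc.e) = bc.ι (E.toFun d) * bc.e := by
        rw [← mul_assoc, bc.jones]
      rw [map_mul bc.ι]
      simp only [mul_assoc]
      rw [hj]
    have heq : ∀ j, bc.ι (∑ k, ∑ l, x k * E.toFun (h j k l)) * bc.e
        = z * bc.ι (x j - E.toFun (x j)) * bc.e := by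
      intro j
      rw [hh j]
      simp only [map_sum, Finset.sum_mul]
      exact Finset.sum_congr rfl fun k _ => Finset.sum_congr rfl fun l _ => (tr _ _).symm
    have hfsme : ∀ i, (1 - bc.e) * (bc.ι (star (x i - E.toFun (x i))) * bc.e)
        = bc.ι (star (x i - E.toFun (x i))) * bc.e := by
      intro i
      rw [sub_mul, one_mul, ← mul_assoc, bc.jones, hEms i, map_zero, zero_mul, sub_zero]
    have harg : ∀ p : Fin n × Fin n, z * u p = ((Real.sqrt (t - 1) : ℝ) : ℂ) •
        ∑ k, ∑ l, bc.ι (x k * E.toFun (h p.2 k l)) * bc.e * bc.ι (x p.1 - E.toFun (x p.1)) := by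
      intro p
      rw [hu' p, mul_smul_comm]
      congr 1
      calc z * (bc.ι (x p.2 - E.toFun (x p.2)) * bc.e * bc.ι (x p.1 - E.toFun (x p.1)))
          = z * bc.ι (x p.2 - E.toFun (x p.2)) * bc.e * bc.ι (x p.1 - E.toFun (x p.1)) := by
            simp only [mul_assoc]
        _ = bc.ι (∑ k, ∑ l, x k * E.toFun (h p.2 k l)) * bc.e * bc.ι (x p.1 - E.toFun (x p.1)) := by
            rw [heq p.2]
        _ = ∑ k, ∑ l, bc.ι (x k * E.toFun (h p.2 k l)) * bc.e * bc.ι (x p.1 - E.toFun (x p.1)) := by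
            simp only [map_sum, Finset.sum_mul]
    have hT : ∀ p : Fin n × Fin n, F (z * u p) * star (u p)
        = bc.ι (E.toFun ((∑ k, ∑ l, x k * E.toFun (h p.2 k l)) * (x p.1 - E.toFun (x p.1))) *
            star (x p.1 - E.toFun (x p.1))) * bc.e * bc.ι (star (x p.2 - E.toFun (x p.2))) := by
      intro p
      have hEt1 : Et (z * u p) = ((Real.sqrt (t - 1) : ℝ) : ℂ) • ((t:ℂ))⁻¹ •
          ((∑ k, ∑ l, x k * E.toFun (h p.2 k l)) * (x p.1 - E.toFun (x p.1))) := by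
        rw [harg p, map_smul]
        congr 1
        calc Et (∑ k, ∑ l, bc.ι (x k * E.toFun (h p.2 k l)) * bc.e * bc.ι (x p.1 - E.toFun (x p.1)))
            = ∑ k, ∑ l, ((t:ℂ))⁻¹ • ((x k * E.toFun (h p.2 k l)) * (x p.1 - E.toFun (x p.1))) := by
              rw [map_sum]
              exact Finset.sum_congr rfl fun k _ => by
                rw [map_sum]
                exact Finset.sum_congr rfl fun l _ => by rw [hEt]
          _ = ((t:ℂ))⁻¹ • ((∑ k, ∑ l, x k * E.toFun (h p.2 k l)) * (x p.1 - E.toFun (x p.1))) := by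
              rw [Finset.sum_mul, Finset.smul_sum]
              exact Finset.sum_congr rfl fun k _ => by rw [Finset.sum_mul, Finset.smul_sum]
      rw [hF, hEt1, map_smul E.toFun, map_smul E.toFun, map_smul bc.ι, map_smul bc.ι, hustar p,
        smul_mul_assoc, smul_mul_assoc, smul_mul_assoc, smul_mul_assoc, smul_mul_assoc,
        mul_smul_comm, smul_smul, smul_smul, smul_smul, hscal2, one_smul]
      have h5 := congrArg (· * bc.ι (star (x p.2 - E.toFun (x p.2)))) (hfsme p.1)
      simp only [mul_assoc] at h5
      rw [map_mul bc.ι]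
      simp only [mul_assoc]
      rw [h5]
    calc ∑ p : Fin n × Fin n, F (z * u p) * star (u p)
        = ∑ p : Fin n × Fin n,
            bc.ι (E.toFun ((∑ k, ∑ l, x k * E.toFun (h p.2 k l)) * (x p.1 - E.toFun (x p.1))) *
              star (x p.1 - E.toFun (x p.1))) * bc.e * bc.ι (star (x p.2 - E.toFun (x p.2))) :=
          Finset.sum_congr rfl fun p _ => hT p
      _ = ∑ i, ∑ j,
            bc.ι (E.toFun ((∑ k, ∑ l, x k * E.toFun (h j k l)) * (x i - E.toFun (x i))) *
              star (x i - E.toFun (x i))) * bc.e * bc.ι (star (x j - E.toFun (x j))) := by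
          rw [Fintype.sum_prod_type]
      _ = ∑ j, ∑ i,
            bc.ι (E.toFun ((∑ k, ∑ l, x k * E.toFun (h j k l)) * (x i - E.toFun (x i))) *
              star (x i - E.toFun (x i))) * bc.e * bc.ι (star (x j - E.toFun (x j))) :=
          Finset.sum_comm
      _ = ∑ j, bc.ι ((∑ k, ∑ l, x k * E.toFun (h j k l)) -
            E.toFun (∑ k, ∑ l, x k * E.toFun (h j k l))) * bc.e *
            bc.ι (star (x j - E.toFun (x j))) := by
          refine Finset.sum_congr rfl fun j _ => ?_
          rw [← E.sum_E_m x hx (∑ k, ∑ l, x k * E.toFun (h j k l)), map_sum bc.ι,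
            Finset.sum_mul, Finset.sum_mul]
      _ = ∑ j, z * (bc.ι (x j - E.toFun (x j)) * bc.e * bc.ι (star (x j - E.toFun (x j)))) := by
          refine Finset.sum_congr rfl fun j _ => ?_
          have hzero : bc.ι (E.toFun (∑ k, ∑ l, x k * E.toFun (h j k l))) * bc.e = 0 := by
            rw [← bc.jones, mul_assoc, heq j, ← mul_assoc, ← mul_assoc, hez, zero_mul, zero_mul]
          have hfirst : bc.ι (∑ k, ∑ l, x k * E.toFun (h j k l)) * bc.e *
              bc.ι (star (x j - E.toFun (x j)))
              = z * (bc.ι (x j - E.toFun (x j)) * bc.e * bc.ι (star (x j - E.toFun (x j)))) := by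
            rw [heq j]
            simp only [mul_assoc]
          rw [map_sub bc.ι (∑ k, ∑ l, x k * E.toFun (h j k l))
              (E.toFun (∑ k, ∑ l, x k * E.toFun (h j k l))),
            sub_mul, sub_mul, hzero, zero_mul, sub_zero, hfirst]
      _ = z * (1 - bc.e) := by rw [← Finset.mul_sum, bc.sum_meme x hx]
      _ = z := hzf
  · -- Claim 3 : index
    have hc : ((Real.sqrt (t-1) : ℝ) : ℂ) * ((Real.sqrt (t-1) : ℝ) : ℂ) = ((t - 1 : ℝ) : ℂ) := by
      rw [← Complex.ofReal_mul, hsqrt]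
    have hterm : ∀ p : Fin n × Fin n, u p * star (u p)
        = ((t - 1 : ℝ) : ℂ) • (bc.ι (x p.2 - E.toFun (x p.2)) *
            (bc.e * bc.ι ((x p.1 - E.toFun (x p.1)) * star (x p.1 - E.toFun (x p.1))) * bc.e) *
            bc.ι (star (x p.2 - E.toFun (x p.2)))) := by
      intro p
      rw [hustar p, hu' p, smul_mul_assoc, mul_smul_comm, smul_smul, hc]
      congr 1
      rw [map_mul bc.ι]
      simp only [mul_assoc]
    rw [Finset.sum_congr rfl fun p _ => hterm p, ← Finset.smul_sum, Fintype.sum_prod_type,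
      Finset.sum_comm]
    have hinner : ∀ j, ∑ i, (bc.ι (x j - E.toFun (x j)) *
          (bc.e * bc.ι ((x i - E.toFun (x i)) * star (x i - E.toFun (x i))) * bc.e) *
          bc.ι (star (x j - E.toFun (x j))))
        = ((t - 1 : ℝ) : ℂ) • (bc.ι (x j - E.toFun (x j)) * bc.e * bc.ι (star (x j - E.toFun (x j)))) := by
      intro j
      have h1 : ∑ i, (bc.ι (x j - E.toFun (x j)) *
            (bc.e * bc.ι ((x i - E.toFun (x i)) * star (x i - E.toFun (x i))) * bc.e) *
            bc.ι (star (x j - E.toFun (x j))))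
          = bc.ι (x j - E.toFun (x j)) *
            (bc.e * bc.ι (∑ i, (x i - E.toFun (x i)) * star (x i - E.toFun (x i))) * bc.e) *
            bc.ι (star (x j - E.toFun (x j))) := by
        rw [map_sum bc.ι, Finset.mul_sum, Finset.sum_mul, Finset.mul_sum, Finset.sum_mul]
      rw [h1, E.sum_mm x hx hidx]
      have h2 : bc.e * bc.ι ((t : ℂ) • (1 : B) - 1) * bc.e = ((t - 1 : ℝ) : ℂ) • bc.e := by
        have h3 : ((t - 1 : ℝ) : ℂ) = (t : ℂ) - 1 := by push_cast; ring
        rw [map_sub bc.ι, map_smul bc.ι, map_one, h3, sub_smul, one_smul, mul_sub, sub_mul]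
        simp only [mul_one, bc.e_idem, mul_smul_comm, smul_mul_assoc]
      rw [h2, mul_smul_comm, smul_mul_assoc]
    rw [Finset.sum_congr rfl fun j _ => hinner j, ← Finset.smul_sum, bc.sum_meme x hx,
      smul_smul, ← Complex.ofReal_mul]
    congr 1
    push_cast
    ring

end
end

section
/- Let E : B → A be a conditional expectation with Index E = 2. Then (1−e_A) C*⟨B, e_A⟩ (1−e_A) = A(1−e_A), and the map a ↦ a(1−e_A) is an isomorphism of A onto A(1−e_A). -/
/- Watatani-style conditional expectations, quasi-bases, and the C*-basic
construction, formalized abstractly. -/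

noncomputable section

/-
Write `P = 1 - E` and `p = 1 - e`. The elements `y i = P (x i)` form a quasi-basis of `ker E`,
and index two says exactly that `∑ y i * (y i)⋆ = 1`. Expanding
`w * w' = ∑ (w * y i) * ((y i)⋆ * w')` gives, for `w, w' ∈ ker E`,
`E (w * w') = w * w' + ∑ P (w * y i) * P ((y i)⋆ * w')`. For `w' = w⋆` and after applying `E`,
positivity and faithfulness of `E` kill every `P (w * y i)`, so `ker E * ker E ⊆ A`. Tested
against the total family `ι c * e`, this yields `p ι(b) p = ι(E b) p`, hence
`p ι(b) e ι(c) p = ι(E (b c) - E b E c) p`. Since `E` is contractive, `A` is a C⋆-algebra and the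
injective ⋆-homomorphism `a ↦ ι(a) p` is isometric, so its range is closed, and density of the
span of the `ι(b) e ι(c)` gives the whole corner.
-/

namespace NonUnitalStarAlgHom

variable {𝕜 R D : Type*} [CommSemiring 𝕜] [NonUnitalNonAssocSemiring R] [Module 𝕜 R] [Star R]
  [NonUnitalSemiring D] [StarMul D] [Module 𝕜 D] [IsScalarTower 𝕜 D D]

def cutDown (f : R →⋆ₙₐ[𝕜] D) (p : D) (hp : IsSelfAdjoint p) (hpp : IsIdempotentElem p)
    (hcomm : ∀ r, Commute p (f r)) : R →⋆ₙₐ[𝕜] D where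
  toFun r := f r * p
  map_smul' c r := by rw [map_smul, smul_mul_assoc]; rfl
  map_zero' := by rw [map_zero, zero_mul]
  map_add' r s := by rw [map_add, add_mul]
  map_mul' r s := by
    rw [map_mul, mul_assoc, mul_assoc, ← (hcomm s).eq, ← mul_assoc p p, hpp.eq]
  map_star' r := by
    rw [map_star, star_mul, hp.star_eq, ← map_star]
    exact (hcomm _).eq.symm

end NonUnitalStarAlgHom

namespace CondExp

variable {B : Type*} [NormedRing B] [StarRing B] [NormedAlgebra ℂ B] [StarModule ℂ B]
  {A : StarSubalgebra ℂ B} (E : CondExp B A)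

lemma map_one : E.toFun 1 = 1 := E.fixes 1 (one_mem A)

lemma apply_apply (b : B) : E.toFun (E.toFun b) = E.toFun b := E.fixes _ (E.mem_range b)

def compl : B →ₗ[ℂ] B := LinearMap.id - E.toFun

@[simp]
lemma compl_apply (b : B) : E.compl b = b - E.toFun b := rfl

lemma apply_compl (b : B) : E.toFun (E.compl b) = 0 := by
  rw [compl_apply, map_sub, apply_apply, sub_self]

lemma compl_of_apply_eq_zero {b : B} (hb : E.toFun b = 0) : E.compl b = b := by
  rw [compl_apply, hb, sub_zero]

lemma compl_compl (b : B) : E.compl (E.compl b) = E.compl b :=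
  E.compl_of_apply_eq_zero (E.apply_compl b)

lemma compl_one : E.compl 1 = 0 := by rw [compl_apply, map_one, sub_self]

lemma compl_mul_of_mem (b : B) {a : B} (ha : a ∈ A) : E.compl (b * a) = E.compl b * a := by
  simp only [compl_apply, E.right_mod a ha, sub_mul]

lemma compl_mul_of_mem_left {a : B} (ha : a ∈ A) (b : B) : E.compl (a * b) = a * E.compl b := by
  simp only [compl_apply, E.left_mod a ha, mul_sub]

lemma compl_star (b : B) : E.compl (star b) = star (E.compl b) := by
  simp only [compl_apply, star_sub, E.star_map]

lemma apply_star_compl_mul (u b : B) :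
    E.toFun (star (E.compl u) * b) = E.toFun (star u * E.compl b) := by
  simp only [compl_apply, star_sub, sub_mul, mul_sub, map_sub, ← E.star_map,
    E.left_mod _ (E.mem_range _), E.right_mod _ (E.mem_range _)]

lemma apply_mul_compl (b u : B) : E.toFun (b * E.compl u) = E.toFun (E.compl b * u) := by
  simp only [compl_apply, sub_mul, mul_sub, map_sub, E.left_mod _ (E.mem_range _),
    E.right_mod _ (E.mem_range _)]

lemma apply_star_compl_mul_compl (b : B) :
    E.toFun (star (E.compl b) * E.compl b) =
      E.toFun (star b * b) - star (E.toFun b) * E.toFun b := by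
  rw [apply_star_compl_mul, compl_compl, compl_apply, mul_sub, map_sub,
    E.right_mod _ (E.mem_range b), E.star_map]

def Faithful : Prop := ∀ b, E.toFun (star b * b) = 0 → b = 0

lemma apply_star_mul_self_nonneg [PartialOrder B] [StarOrderedRing B] (b : B) :
    0 ≤ E.toFun (star b * b) := by
  obtain ⟨c, hc⟩ := E.pos b
  rw [hc]
  exact star_mul_self_nonneg c

lemma star_apply_mul_apply_le [PartialOrder B] [StarOrderedRing B] (b : B) :
    star (E.toFun b) * E.toFun b ≤ E.toFun (star b * b) := by
  have h := E.apply_star_mul_self_nonneg (E.compl b)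
  rwa [apply_star_compl_mul_compl, sub_nonneg] at h

end CondExp

namespace IsQuasiBasis

variable {B : Type*} [NormedRing B] [StarRing B] [NormedAlgebra ℂ B] [StarModule ℂ B]
  {A : StarSubalgebra ℂ B} {E : CondExp B A} {n : ℕ} {x : Fin n → B}

lemma sum_compl_mul_apply (hx : IsQuasiBasis E x) (b : B) :
    ∑ i, E.compl (x i) * E.toFun (star (E.compl (x i)) * b) = E.compl b := by
  simp_rw [E.apply_star_compl_mul, ← E.compl_mul_of_mem _ (E.mem_range _), ← map_sum, hx.1,
    E.compl_compl]

lemma sum_apply_mul_compl (hx : IsQuasiBasis E x) (b : B) :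
    ∑ i, E.toFun (b * E.compl (x i)) * star (E.compl (x i)) = E.compl b := by
  simp_rw [E.apply_mul_compl, ← E.compl_star, ← E.compl_mul_of_mem_left (E.mem_range _),
    ← map_sum, hx.2, E.compl_compl]

lemma sum_compl_mul_star_compl (hx : IsQuasiBasis E x) (hidx : ∑ i, x i * star (x i) = 2) :
    ∑ i, E.compl (x i) * star (E.compl (x i)) = 1 := by
  have h₁ : ∑ i, E.compl (x i) * E.toFun (star (x i)) = 0 := by
    have hone : ∑ i, x i * E.toFun (star (x i)) = 1 := by simpa using hx.1 1
    simp_rw [← E.compl_mul_of_mem _ (E.mem_range _), ← map_sum, hone, E.compl_one]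
  have h₂ : ∑ i, E.toFun (x i) * star (x i) = 1 := by simpa using hx.2 1
  simp_rw [← E.compl_star, E.compl_apply (star _), mul_sub, Finset.sum_sub_distrib, h₁,
    E.compl_apply, sub_mul, Finset.sum_sub_distrib, hidx, h₂]
  norm_num

lemma apply_mul_eq_mul_add_sum (hx : IsQuasiBasis E x) (hidx : ∑ i, x i * star (x i) = 2)
    {w w' : B} (hw : E.toFun w = 0) (hw' : E.toFun w' = 0) :
    E.toFun (w * w') = w * w' +
      ∑ i, E.compl (w * E.compl (x i)) * E.compl (star (E.compl (x i)) * w') := by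
  set y := fun i => E.compl (x i)
  have hsplit : ∀ u v : B, u * v = E.toFun u * v + u * E.toFun v - E.toFun u * E.toFun v
      + E.compl u * E.compl v := by
    intro u v
    simp only [CondExp.compl_apply]
    noncomm_ring
  have h₁ : ∑ i, E.toFun (w * y i) * star (y i) = w :=
    (hx.sum_apply_mul_compl w).trans (E.compl_of_apply_eq_zero hw)
  have h₂ : ∑ i, y i * E.toFun (star (y i) * w') = w' :=
    (hx.sum_compl_mul_apply w').trans (E.compl_of_apply_eq_zero hw')
  have h₃ : ∑ i, E.toFun (w * y i) * E.toFun (star (y i) * w') = E.toFun (w * w') := by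
    have hmod := fun i => E.left_mod _ (E.mem_range (w * y i)) (star (y i) * w')
    simp_rw [← hmod, ← mul_assoc, ← map_sum, ← Finset.sum_mul, h₁]
  have hww' : w * w' = ∑ i, (w * y i) * (star (y i) * w') := by
    calc w * w' = w * (∑ i, y i * star (y i)) * w' := by
          rw [hx.sum_compl_mul_star_compl hidx, mul_one]
      _ = _ := by simp only [Finset.mul_sum, Finset.sum_mul, mul_assoc]
  have hA : ∑ i, E.toFun (w * y i) * (star (y i) * w') = w * w' := by
    simp only [← mul_assoc, ← Finset.sum_mul, h₁]
  have hB : ∑ i, w * y i * E.toFun (star (y i) * w') = w * w' := by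
    simp only [mul_assoc, ← Finset.mul_sum, h₂]
  have hsum : w * w' = w * w' + w * w' - E.toFun (w * w') +
      ∑ i, E.compl (w * y i) * E.compl (star (y i) * w') := by
    conv_lhs => rw [hww', Finset.sum_congr rfl fun i _ => hsplit (w * y i) _]
    rw [Finset.sum_add_distrib, Finset.sum_sub_distrib, Finset.sum_add_distrib, hA, hB, h₃]
  rw [← sub_eq_zero, ← sub_eq_zero.mpr hsum]
  abel

end IsQuasiBasis

section CStarAlgebra

variable {B : Type*} [CStarAlgebra B] {A : StarSubalgebra ℂ B} (E : CondExp B A)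

lemma CondExp.apply_mono [PartialOrder B] [StarOrderedRing B] {v w : B} (h : v ≤ w) :
    E.toFun v ≤ E.toFun w := by
  obtain ⟨s, hs⟩ := CStarAlgebra.nonneg_iff_eq_star_mul_self.mp (sub_nonneg.mpr h)
  have := E.apply_star_mul_self_nonneg s
  rwa [← hs, map_sub, sub_nonneg] at this

lemma CondExp.apply_algebraMap (r : ℝ) : E.toFun (algebraMap ℝ B r) = algebraMap ℝ B r :=
  E.fixes _ (IsScalarTower.algebraMap_apply ℝ ℂ B r ▸ A.algebraMap_mem _)

lemma CondExp.norm_apply_le (b : B) : ‖E.toFun b‖ ≤ ‖b‖ := by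
  let _ := CStarAlgebra.spectralOrder B
  have _ := CStarAlgebra.spectralOrderedRing B
  have h : star (E.toFun b) * E.toFun b ≤ algebraMap ℝ B (‖b‖ ^ 2) := by
    calc star (E.toFun b) * E.toFun b ≤ E.toFun (star b * b) := E.star_apply_mul_apply_le b
      _ ≤ E.toFun (algebraMap ℝ B (‖b‖ ^ 2)) :=
          E.apply_mono CStarAlgebra.star_mul_le_algebraMap_norm_sq
      _ = algebraMap ℝ B (‖b‖ ^ 2) := E.apply_algebraMap _
  rw [← CStarAlgebra.norm_le_iff_le_algebraMap _ (by positivity), CStarRing.norm_star_mul_self,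
    ← sq] at h
  exact pow_le_pow_iff_left₀ (norm_nonneg _) (norm_nonneg _) two_ne_zero |>.mp h

lemma CondExp.isClosed_subalgebra (E : CondExp B A) : IsClosed (A : Set B) := by
  have hcont : Continuous E.toFun :=
    (E.toFun.mkContinuous 1 fun b => by simpa using E.norm_apply_le b).continuous
  convert isClosed_eq hcont continuous_id
  ext b
  exact ⟨E.fixes b, fun hb : E.toFun b = b => hb ▸ E.mem_range b⟩

variable {E} in
lemma IsQuasiBasis.apply_mul_eq_mul {n : ℕ} {x : Fin n → B} (hE : E.Faithful)
    (hx : IsQuasiBasis E x) (hidx : ∑ i, x i * star (x i) = 2)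
    {w w' : B} (hw : E.toFun w = 0) (hw' : E.toFun w' = 0) : E.toFun (w * w') = w * w' := by
  set r := fun i => E.compl (w * E.compl (x i))
  have hr : ∀ i, r i = 0 := by
    let _ := CStarAlgebra.spectralOrder B
    have _ := CStarAlgebra.spectralOrderedRing B
    have hstar : ∀ i, E.compl (star (E.compl (x i)) * star w) = star (r i) := fun i => by
      rw [← star_mul, E.compl_star]
    have hcore := hx.apply_mul_eq_mul_add_sum hidx hw (by rw [E.star_map, hw, star_zero])
    simp_rw [hstar] at hcore
    have hsum : ∑ i, E.toFun (star (star (r i)) * star (r i)) = 0 := by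
      have := congrArg E.toFun hcore
      rw [E.apply_apply, map_add, map_sum, left_eq_add] at this
      simpa only [star_star] using this
    intro i
    have := (Finset.sum_eq_zero_iff_of_nonneg fun i _ => E.apply_star_mul_self_nonneg _).mp hsum i
      (Finset.mem_univ i)
    exact star_eq_zero.mp (hE _ this)
  rw [hx.apply_mul_eq_mul_add_sum hidx hw hw',
    Finset.sum_eq_zero fun i _ => by rw [show E.compl _ = r i from rfl, hr i, zero_mul], add_zero]

end CStarAlgebra

namespace BasicConstruction

variable {B C : Type*} [NormedRing B] [StarRing B] [NormedAlgebra ℂ B] [StarModule ℂ B]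
  [NormedRing C] [StarRing C] [NormedAlgebra ℂ C] [StarModule ℂ C]
  {A : StarSubalgebra ℂ B} {E : CondExp B A} (bc : BasicConstruction E C)

lemma mem_of_isClosed {T : Submodule ℂ C} (hT : IsClosed (T : Set C))
    (hgen : ∀ b c, bc.ι b * bc.e * bc.ι c ∈ T) (z : C) : z ∈ T := by
  have hspan : Submodule.span ℂ {y : C | ∃ b c : B, y = bc.ι b * bc.e * bc.ι c} ≤ T :=
    Submodule.span_le.mpr <| by rintro _ ⟨b, c, rfl⟩; exact hgen b c
  have hle := Submodule.topologicalClosure_minimal _ hspan hT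
  rw [bc.dense] at hle
  exact hle Submodule.mem_top

lemma ext_of_mul_e {u v : C} (h : ∀ b, u * bc.ι b * bc.e = v * bc.ι b * bc.e) : u = v := by
  have h₁ := bc.mem_of_isClosed (ContinuousLinearMap.mul ℂ C (u - v)).isClosed_ker
    (fun b c => by simp [← mul_assoc, h b]) 1
  simpa [sub_eq_zero] using h₁

lemma commute_e_ι {a : B} (ha : a ∈ A) : Commute bc.e (bc.ι a) := bc.ext_of_mul_e fun b => by
  calc bc.e * bc.ι a * bc.ι b * bc.e = bc.e * bc.ι (a * b) * bc.e := by
        rw [map_mul, mul_assoc bc.e]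
    _ = bc.ι a * (bc.e * bc.ι b * bc.e) := by
        rw [bc.jones, E.left_mod a ha, bc.jones, map_mul, mul_assoc]
    _ = bc.ι a * bc.e * bc.ι b * bc.e := by simp only [mul_assoc]

lemma commute_one_sub_e_ι {a : B} (ha : a ∈ A) : Commute (1 - bc.e) (bc.ι a) :=
  (Commute.one_left _).sub_left (bc.commute_e_ι ha)

lemma one_sub_e_mul_ι_mul_e (b : B) :
    (1 - bc.e) * bc.ι b * bc.e = bc.ι (E.compl b) * bc.e := by
  rw [sub_mul, sub_mul, one_mul, bc.jones, CondExp.compl_apply, map_sub, sub_mul]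

lemma faithful [CStarRing C] (bc : BasicConstruction E C) : E.Faithful := by
  intro b hb
  refine bc.mul_e_inj b ((CStarRing.star_mul_self_eq_zero_iff _).mp ?_)
  calc star (bc.ι b * bc.e) * (bc.ι b * bc.e) = bc.e * bc.ι (star b * b) * bc.e := by
        rw [star_mul, bc.e_star, ← map_star, map_mul]
        simp only [mul_assoc]
    _ = 0 := by rw [bc.jones, hb, map_zero, zero_mul]

lemma eq_zero_of_ι_mul_one_sub_e_eq_zero {n : ℕ} {x : Fin n → B} (hx : IsQuasiBasis E x)
    (hidx : ∑ i, x i * star (x i) = 2) {b : B} (h : bc.ι b * (1 - bc.e) = 0) : b = 0 := by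
  have he : bc.ι b * bc.e = bc.ι b := by
    rw [mul_sub, mul_one, sub_eq_zero] at h
    exact h.symm
  have hy : ∀ i, b * E.compl (x i) = 0 := fun i => bc.mul_e_inj _ <| by
    calc bc.ι (b * E.compl (x i)) * bc.e = bc.ι b * (bc.e * bc.ι (E.compl (x i)) * bc.e) := by
          rw [map_mul]
          conv_lhs => rw [← he]
          simp only [mul_assoc]
      _ = 0 := by rw [bc.jones, E.apply_compl, map_zero, zero_mul, mul_zero]
  calc b = b * ∑ i, E.compl (x i) * star (E.compl (x i)) := by
        rw [hx.sum_compl_mul_star_compl hidx, mul_one]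
    _ = 0 := by
        rw [Finset.mul_sum]
        exact Finset.sum_eq_zero fun i _ => by rw [← mul_assoc, hy i, zero_mul]

lemma ι_mul_one_sub_e_injective {n : ℕ} {x : Fin n → B} (hx : IsQuasiBasis E x)
    (hidx : ∑ i, x i * star (x i) = 2) : Function.Injective fun b => bc.ι b * (1 - bc.e) :=
  fun b b' h => sub_eq_zero.mp <| bc.eq_zero_of_ι_mul_one_sub_e_eq_zero hx hidx <| by
    rw [map_sub, sub_mul]
    exact sub_eq_zero.mpr h

end BasicConstruction

namespace BasicConstruction

variable {B C : Type*} [CStarAlgebra B] [NormedRing C] [StarRing C] [NormedAlgebra ℂ C]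
  [StarModule ℂ C] {A : StarSubalgebra ℂ B} {E : CondExp B A} (bc : BasicConstruction E C)
  {n : ℕ} {x : Fin n → B}

lemma one_sub_e_mul_ι_mul_one_sub_e [CStarRing C] (hx : IsQuasiBasis E x)
    (hidx : ∑ i, x i * star (x i) = 2) (b : B) :
    (1 - bc.e) * bc.ι b * (1 - bc.e) = bc.ι (E.toFun b) * (1 - bc.e) :=
    bc.ext_of_mul_e fun c => by
  have hker : E.toFun (E.compl b * E.compl c) = E.compl b * E.compl c :=
    hx.apply_mul_eq_mul bc.faithful hidx (E.apply_compl b) (E.apply_compl c)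
  have key : E.compl (b * E.compl c) = E.toFun b * E.compl c := by
    conv_lhs => rw [← add_sub_cancel (E.toFun b) b, ← E.compl_apply]
    rw [add_mul, map_add, E.compl_mul_of_mem_left (E.mem_range b), E.compl_compl,
      E.compl_apply (_ * _), hker, sub_self, add_zero]
  calc (1 - bc.e) * bc.ι b * (1 - bc.e) * bc.ι c * bc.e
      = (1 - bc.e) * bc.ι b * ((1 - bc.e) * bc.ι c * bc.e) := by simp only [mul_assoc]
    _ = (1 - bc.e) * bc.ι (b * E.compl c) * bc.e := by
        rw [one_sub_e_mul_ι_mul_e, map_mul]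
        simp only [mul_assoc]
    _ = bc.ι (E.toFun b) * ((1 - bc.e) * bc.ι c * bc.e) := by
        rw [one_sub_e_mul_ι_mul_e, key, one_sub_e_mul_ι_mul_e, map_mul, mul_assoc]
    _ = bc.ι (E.toFun b) * (1 - bc.e) * bc.ι c * bc.e := by simp only [mul_assoc]

end BasicConstruction

lemma BasicConstruction.exists_one_sub_e_mul_mul_one_sub_e {B C : Type*} [CStarAlgebra B]
    [CStarAlgebra C] {A : StarSubalgebra ℂ B} {E : CondExp B A} (bc : BasicConstruction E C)
    {n : ℕ} {x : Fin n → B} (hx : IsQuasiBasis E x) (hidx : ∑ i, x i * star (x i) = 2) (z : C) :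
    ∃ a ∈ A, (1 - bc.e) * z * (1 - bc.e) = bc.ι a * (1 - bc.e) := by
  have : IsClosed (A : Set B) := E.isClosed_subalgebra
  set p := 1 - bc.e with hp_def
  have hp : IsSelfAdjoint p := by simp [hp_def, IsSelfAdjoint, bc.e_star]
  have hpp : IsIdempotentElem p := IsIdempotentElem.one_sub bc.e_idem
  let φ : A →⋆ₙₐ[ℂ] C := ((bc.ι.comp A.subtype : A →⋆ₐ[ℂ] C) : A →⋆ₙₐ[ℂ] C).cutDown p hp hpp
    fun a => bc.commute_one_sub_e_ι a.2
  have hφ : Isometry φ := NonUnitalStarAlgHom.isometry φ fun a a' h =>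
    Subtype.ext (bc.ι_mul_one_sub_e_injective hx hidx h)
  have hcorner : ∀ b, p * bc.ι b * p = bc.ι (E.toFun b) * p :=
    bc.one_sub_e_mul_ι_mul_one_sub_e hx hidx
  let T := (LinearMap.range (φ : A →ₗ[ℂ] C)).comap
    (LinearMap.mulLeft ℂ p ∘ₗ LinearMap.mulRight ℂ p)
  have hT : IsClosed (T : Set C) :=
    hφ.isClosedEmbedding.isClosed_range.preimage (f := fun y => p * (y * p)) (by fun_prop)
  have hgen : ∀ b c, bc.ι b * bc.e * bc.ι c ∈ T := by
    intro b c
    have he : bc.e = 1 - p := by rw [hp_def, sub_sub_cancel]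
    refine ⟨⟨E.toFun (b * c) - E.toFun b * E.toFun c,
      sub_mem (E.mem_range _) (mul_mem (E.mem_range _) (E.mem_range _))⟩, ?_⟩
    change bc.ι (E.toFun (b * c) - E.toFun b * E.toFun c) * p =
      p * (bc.ι b * bc.e * bc.ι c * p)
    calc bc.ι (E.toFun (b * c) - E.toFun b * E.toFun c) * p
        = p * bc.ι (b * c) * p - p * bc.ι b * p * bc.ι c * p := by
          rw [hcorner, hcorner b, mul_assoc (bc.ι (E.toFun b)), mul_assoc (bc.ι (E.toFun b)),
            hcorner c, map_sub, map_mul bc.ι, sub_mul, mul_assoc]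
      _ = p * (bc.ι b * bc.e * bc.ι c * p) := by
          rw [he, map_mul]
          noncomm_ring
  obtain ⟨a, ha⟩ := bc.mem_of_isClosed hT hgen z
  refine ⟨a, a.2, ?_⟩
  rw [mul_assoc]
  exact ha.symm

theorem corner_eq_A_of_index_two_general
    {B C : Type*} [NormedRing B] [StarRing B] [CStarRing B] [NormedAlgebra ℂ B]
    [StarModule ℂ B] [CompleteSpace B]
    [NormedRing C] [StarRing C] [CStarRing C] [NormedAlgebra ℂ C]
    [StarModule ℂ C] [CompleteSpace C]
    {A : StarSubalgebra ℂ B} (E : CondExp B A)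
    {n : ℕ} (x : Fin n → B) (hx : IsQuasiBasis E x)
    (hidx : ∑ i, x i * star (x i) = (2 : B))
    (bc : BasicConstruction E C)
    :
    (∀ c : C, ∃ a ∈ A, (1 - bc.e) * c * (1 - bc.e) = bc.ι a * (1 - bc.e)) ∧
    ({y : C | ∃ a ∈ A, y = bc.ι a * (1 - bc.e)} =
      {y : C | ∃ c : C, y = (1 - bc.e) * c * (1 - bc.e)}) ∧
    Function.Injective (fun a : A => bc.ι (a : B) * (1 - bc.e)) := by
  let _ : CStarAlgebra B := { ‹NormedRing B›, ‹StarRing B›, ‹CStarRing B›, ‹NormedAlgebra ℂ B›,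
    ‹StarModule ℂ B›, ‹CompleteSpace B› with }
  let _ : CStarAlgebra C := { ‹NormedRing C›, ‹StarRing C›, ‹CStarRing C›, ‹NormedAlgebra ℂ C›,
    ‹StarModule ℂ C›, ‹CompleteSpace C› with }
  have hcorner := bc.exists_one_sub_e_mul_mul_one_sub_e hx hidx
  refine ⟨hcorner, ?_, fun a a' h => Subtype.ext (bc.ι_mul_one_sub_e_injective hx hidx h)⟩
  ext y
  constructor
  · rintro ⟨a, ha, rfl⟩
    exact ⟨bc.ι a, by rw [bc.one_sub_e_mul_ι_mul_one_sub_e hx hidx, E.fixes a ha]⟩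
  · rintro ⟨z, rfl⟩
    exact hcorner z

/-- if Index E = 2 then `(1−e_A) C*⟨B,e_A⟩ (1−e_A) = A(1−e_A)` and
`a ↦ a(1−e_A)` is an isomorphism of `A` onto `A(1−e_A)`. -/
theorem corner_eq_A_of_index_two
    {B C : Type*} [NormedRing B] [StarRing B] [CStarRing B] [NormedAlgebra ℂ B]
    [StarModule ℂ B] [CompleteSpace B]
    [NormedRing C] [StarRing C] [CStarRing C] [NormedAlgebra ℂ C]
    [StarModule ℂ C] [CompleteSpace C]
    {A : StarSubalgebra ℂ B} (E : CondExp B A)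
    {n : ℕ} (x : Fin n → B) (hx : IsQuasiBasis E x)
    (hidx : ∑ i, x i * star (x i) = (2 : B))
    (bc : BasicConstruction E C)
    (Et : C →ₗ[ℂ] B)
    (hEt : ∀ b c : B, Et (bc.ι b * bc.e * bc.ι c) = ((2 : ℂ))⁻¹ • (b * c))
    :
    (∀ c : C, ∃ a ∈ A, (1 - bc.e) * c * (1 - bc.e) = bc.ι a * (1 - bc.e)) ∧
    ({y : C | ∃ a ∈ A, y = bc.ι a * (1 - bc.e)} =
      {y : C | ∃ c : C, y = (1 - bc.e) * c * (1 - bc.e)}) ∧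
    Function.Injective (fun a : A => bc.ι (a : B) * (1 - bc.e)) :=
  corner_eq_A_of_index_two_general E x hx hidx bc
end
end

section
/- Let E : B → A be a conditional expectation with Index E = 2 and β the automorphism β(b) = 2E(b) − b of B. Then the C*-basic construction C*⟨B, e_A⟩ is isomorphic to the crossed product B ⋊_β ℤ₂, via an isomorphism fixing B pointwise and sending e_A to (1/2)(W + 1), where W is the canonical unitary implementing β. -/
/- Watatani-style conditional expectations, quasi-bases, and the C*-basic
construction, formalized abstractly. -/

noncomputable section

/-!
In `C = C*⟨B, e⟩` the Jones relation `e b e = E(b) e`, tested against the dense span of `B e B`,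
forces `e b = (b - E b) + β(b) e`; here `β = 2E - id` is multiplicative because `W` implements it
in `D`. Hence `2e - 1` is a self-adjoint unitary implementing `β` on `B`, and the presentation
`D = B ⊕ B W` yields a *-homomorphism `D → C` fixing `B` with `W ↦ 2e - 1`. It is injective
because the index-2 quasi-basis makes `B + B e` a direct sum, hence isometric, and its closed
range contains `B e B`, which spans a dense subspace.
-/

section ImplementingSymmetry

variable {𝕜 B D R : Type*} [CommSemiring 𝕜] [Ring B] [StarRing B] [Algebra 𝕜 B]
  [Ring D] [StarRing D] [Algebra 𝕜 D] [Ring R] [StarRing R] [Algebra 𝕜 R] {β : B → B}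

structure IsImplementingSymmetry (j : B →⋆ₐ[𝕜] R) (β : B → B) (U : R) : Prop where
  star_eq : star U = U
  mul_self : U * U = 1
  mul_map : ∀ b, U * j b = j (β b) * U

namespace IsImplementingSymmetry

variable {j : B →⋆ₐ[𝕜] R} {U : R}

theorem add_mul_mul_add_mul (hU : IsImplementingSymmetry j β U) (b₁ b₂ c₁ c₂ : B) :
    (j b₁ + j b₂ * U) * (j c₁ + j c₂ * U)
      = j (b₁ * c₁ + b₂ * β c₂) + j (b₁ * c₂ + b₂ * β c₁) * U := by
  have h₁ : j b₂ * U * j c₁ = j (b₂ * β c₁) * U := by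
    rw [mul_assoc, hU.mul_map, ← mul_assoc, ← map_mul]
  have h₂ : j b₂ * U * (j c₂ * U) = j (b₂ * β c₂) := by
    rw [mul_assoc, ← mul_assoc U, hU.mul_map, mul_assoc (j (β c₂)), hU.mul_self, mul_one,
      ← map_mul]
  have h₃ : j b₁ * (j c₂ * U) = j (b₁ * c₂) * U := by rw [← mul_assoc, ← map_mul]
  rw [add_mul, mul_add, mul_add, map_add, map_add, add_mul, ← map_mul, h₁, h₂, h₃]
  abel

theorem star_add_mul (hU : IsImplementingSymmetry j β U) (b₁ b₂ : B) :
    star (j b₁ + j b₂ * U) = j (star b₁) + j (β (star b₂)) * U := by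
  rw [star_add, star_mul, hU.star_eq, ← map_star, ← map_star, hU.mul_map]

end IsImplementingSymmetry

variable {ι : B →⋆ₐ[𝕜] D} {W : D}

theorem exists_starAlgHom_of_isImplementingSymmetry (hW : IsImplementingSymmetry ι β W)
    (hdecomp : ∀ d, ∃ b₁ b₂, d = ι b₁ + ι b₂ * W)
    (huniq : ∀ b₁ b₂, ι b₁ + ι b₂ * W = 0 → b₁ = 0 ∧ b₂ = 0)
    {j : B →⋆ₐ[𝕜] R} {U : R} (hU : IsImplementingSymmetry j β U) :
    ∃ Φ : D →⋆ₐ[𝕜] R, (∀ b, Φ (ι b) = j b) ∧ Φ W = U := by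
  choose f₁ f₂ hf using hdecomp
  set φ : D → R := fun d => j (f₁ d) + j (f₂ d) * U
  have hφ (b₁ b₂ : B) : φ (ι b₁ + ι b₂ * W) = j b₁ + j b₂ * U := by
    set d := ι b₁ + ι b₂ * W
    have hd : ι (f₁ d - b₁) + ι (f₂ d - b₂) * W = 0 := by
      rw [map_sub, map_sub, sub_mul, sub_add_sub_comm, ← hf d, sub_self]
    obtain ⟨h₁, h₂⟩ := huniq _ _ hd
    simp only [φ, sub_eq_zero.mp h₁, sub_eq_zero.mp h₂]
  have hφι (b : B) : φ (ι b) = j b := by simpa using hφ b 0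
  refine ⟨
    { toFun := φ
      map_one' := by simpa using hφι 1
      map_mul' := fun d d' => by
        rw [hf d, hf d', hW.add_mul_mul_add_mul, hφ, hφ, hφ, hU.add_mul_mul_add_mul]
      map_zero' := by simpa using hφι 0
      map_add' := fun d d' => by
        rw [hf d, hf d', add_add_add_comm, ← add_mul, ← map_add, ← map_add, hφ, hφ, hφ,
          map_add, map_add, add_mul, add_add_add_comm]
      commutes' := fun r => by simpa [AlgHomClass.commutes] using hφι (algebraMap 𝕜 B r)
      map_star' := fun d => by rw [hf d, hW.star_add_mul, hφ, hφ, hU.star_add_mul] },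
    hφι, by simpa using hφ 0 1⟩

theorem injective_of_isImplementingSymmetry (Φ : D →⋆ₐ[𝕜] R)
    (hdecomp : ∀ d, ∃ b₁ b₂, d = ι b₁ + ι b₂ * W) {j : B →⋆ₐ[𝕜] R} {U : R}
    (hΦι : ∀ b, Φ (ι b) = j b) (hΦW : Φ W = U)
    (hfree : ∀ b₁ b₂, j b₁ + j b₂ * U = 0 → b₁ = 0 ∧ b₂ = 0) :
    Function.Injective Φ := by
  refine (injective_iff_map_eq_zero Φ).mpr fun d hd => ?_
  obtain ⟨b₁, b₂, rfl⟩ := hdecomp d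
  rw [map_add, map_mul, hΦι, hΦι, hΦW] at hd
  obtain ⟨rfl, rfl⟩ := hfree _ _ hd
  simp

end ImplementingSymmetry

theorem isUnit_two_of_algebra (𝕜 : Type*) {A : Type*} [Field 𝕜] [CharZero 𝕜] [Semiring A]
    [Algebra 𝕜 A] : IsUnit (2 : A) := by
  simpa only [map_ofNat] using (two_ne_zero : (2 : 𝕜) ≠ 0).isUnit.map (algebraMap 𝕜 A)

theorem map_mul_of_mul_map_mul_eq {M N F : Type*} [Mul M] [Monoid N] [FunLike F M N]
    [MulHomClass F M N] {f : F} (hf : Function.Injective f) {W : N} (hW : W * W = 1)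
    {β : M → M} (h : ∀ b, W * f b * W = f (β b)) (b c : M) : β (b * c) = β b * β c := by
  apply hf
  rw [map_mul, ← h, ← h, ← h, map_mul]
  simp only [mul_assoc]
  rw [← mul_assoc W W, hW, one_mul]

namespace CondExp

variable {B : Type*} [NormedRing B] [StarRing B] [NormedAlgebra ℂ B] [StarModule ℂ B]
  {A : StarSubalgebra ℂ B} (E : CondExp B A)

def reflection (b : B) : B := 2 * E.toFun b - b

theorem toFun_mul_of_reflection_mul
    (hβ : ∀ b c, E.reflection (b * c) = E.reflection b * E.reflection c) (c b : B) :
    E.toFun (c * b) = (c - E.toFun c) * b + E.reflection c * E.toFun b := by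
  apply (isUnit_two_of_algebra ℂ).mul_left_cancel
  have h := hβ c b
  simp only [reflection] at h ⊢
  rw [sub_eq_iff_eq_add] at h
  rw [h]
  noncomm_ring

end CondExp

theorem IsQuasiBasis.eq_zero_of_mul_eq_mul_toFun {B : Type*} [NormedRing B] [StarRing B]
    [NormedAlgebra ℂ B] [StarModule ℂ B] {A : StarSubalgebra ℂ B} {E : CondExp B A} {n : ℕ}
    {x : Fin n → B} (hx : IsQuasiBasis E x) (hidx : ∑ i, x i * star (x i) = 2) {c : B}
    (hc : ∀ b, c * b = c * E.toFun b) : c = 0 := by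
  have h : c * 2 = c := calc
    c * 2 = ∑ i, c * x i * star (x i) := by rw [← hidx, Finset.mul_sum]; simp only [mul_assoc]
    _ = c * ∑ i, E.toFun (1 * x i) * star (x i) := by
      simp only [Finset.mul_sum, one_mul, ← mul_assoc, hc (x _)]
    _ = c := by rw [hx.2, mul_one]
  rwa [mul_two, add_eq_left] at h

namespace BasicConstruction

variable {B C : Type*} [NormedRing B] [StarRing B] [NormedAlgebra ℂ B] [StarModule ℂ B]
  [NormedRing C] [StarRing C] [NormedAlgebra ℂ C] [StarModule ℂ C]
  {A : StarSubalgebra ℂ B} {E : CondExp B A} (bc : BasicConstruction E C)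

theorem eq_zero_of_forall_mul_ι_mul_e_eq_zero {u : C} (hu : ∀ b, u * bc.ι b * bc.e = 0) :
    u = 0 := by
  have hle : Submodule.span ℂ {y : C | ∃ b c : B, y = bc.ι b * bc.e * bc.ι c}
      ≤ LinearMap.ker (ContinuousLinearMap.mul ℂ C u : C →ₗ[ℂ] C) := by
    rw [Submodule.span_le]
    rintro _ ⟨b, c, rfl⟩
    simp [← mul_assoc, hu]
  have hker := Submodule.topologicalClosure_minimal _ hle (ContinuousLinearMap.isClosed_ker _)
  rw [bc.dense] at hker
  simpa using hker (Submodule.mem_top (x := 1))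

theorem e_mul_ι
    (hE : ∀ c b, E.toFun (c * b) = (c - E.toFun c) * b + E.reflection c * E.toFun b) (c : B) :
    bc.e * bc.ι c = bc.ι (c - E.toFun c) + bc.ι (E.reflection c) * bc.e := by
  refine sub_eq_zero.mp (bc.eq_zero_of_forall_mul_ι_mul_e_eq_zero fun b => ?_)
  calc (bc.e * bc.ι c - (bc.ι (c - E.toFun c) + bc.ι (E.reflection c) * bc.e)) * bc.ι b * bc.e
      = bc.e * bc.ι (c * b) * bc.e - bc.ι ((c - E.toFun c) * b) * bc.e
          - bc.ι (E.reflection c) * (bc.e * bc.ι b * bc.e) := by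
        simp only [map_mul]; noncomm_ring
    _ = bc.ι (E.toFun (c * b) - ((c - E.toFun c) * b + E.reflection c * E.toFun b)) * bc.e := by
        rw [bc.jones, bc.jones]; simp only [map_sub, map_add, map_mul]; noncomm_ring
    _ = 0 := by rw [hE, sub_self, map_zero, zero_mul]

theorem isImplementingSymmetry
    (hE : ∀ c b, E.toFun (c * b) = (c - E.toFun c) * b + E.reflection c * E.toFun b) :
    IsImplementingSymmetry bc.ι E.reflection (2 * bc.e - 1) where
  star_eq := by
    rw [star_sub, star_mul, bc.e_star, star_ofNat, star_one]
    noncomm_ring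
  mul_self := calc
    (2 * bc.e - 1) * (2 * bc.e - 1) = 4 * (bc.e * bc.e) - 4 * bc.e + 1 := by noncomm_ring
    _ = 1 := by rw [bc.e_idem]; abel
  mul_map b := by
    rw [sub_mul, mul_assoc, bc.e_mul_ι hE, one_mul]
    simp only [CondExp.reflection, map_sub, map_mul, map_ofNat]
    noncomm_ring

theorem eq_zero_of_ι_add_ι_mul_e_eq_zero {n : ℕ} {x : Fin n → B} (hx : IsQuasiBasis E x)
    (hidx : ∑ i, x i * star (x i) = 2) {c₁ c₂ : B} (h : bc.ι c₁ + bc.ι c₂ * bc.e = 0) :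
    c₁ = 0 ∧ c₂ = 0 := by
  have hc₂ : c₂ = -c₁ := by
    refine eq_neg_of_add_eq_zero_right (bc.mul_e_inj _ ?_)
    simpa [add_mul, mul_assoc, bc.e_idem] using congrArg (· * bc.e) h
  have hce : bc.ι c₁ = bc.ι c₁ * bc.e := by
    rwa [hc₂, map_neg, neg_mul, ← sub_eq_add_neg, sub_eq_zero] at h
  have hc₁ : c₁ = 0 := hx.eq_zero_of_mul_eq_mul_toFun hidx fun b => by
    refine sub_eq_zero.mp (bc.mul_e_inj _ ?_)
    rw [map_sub, sub_mul, sub_eq_zero, map_mul, map_mul]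
    nth_rewrite 1 [hce]
    rw [mul_assoc, mul_assoc, ← mul_assoc bc.e, bc.jones, ← mul_assoc]
  exact ⟨hc₁, by rw [hc₂, hc₁, neg_zero]⟩

theorem eq_zero_of_ι_add_ι_mul_symm_eq_zero {n : ℕ} {x : Fin n → B} (hx : IsQuasiBasis E x)
    (hidx : ∑ i, x i * star (x i) = 2) {c₁ c₂ : B}
    (h : bc.ι c₁ + bc.ι c₂ * (2 * bc.e - 1) = 0) : c₁ = 0 ∧ c₂ = 0 := by
  have h' : bc.ι (c₁ - c₂) + bc.ι (2 * c₂) * bc.e = 0 := by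
    rw [← h]; simp only [map_sub, map_mul, map_ofNat]; noncomm_ring
  obtain ⟨h₁, h₂⟩ := bc.eq_zero_of_ι_add_ι_mul_e_eq_zero hx hidx h'
  have hc₂ : c₂ = 0 := (isUnit_two_of_algebra ℂ).mul_left_cancel (h₂.trans (mul_zero 2).symm)
  exact ⟨by rwa [hc₂, sub_zero] at h₁, hc₂⟩

end BasicConstruction

theorem StarAlgHom.surjective_of_span_dense {C D : Type*} [CStarAlgebra C] [CStarAlgebra D]
    (Φ : D →⋆ₐ[ℂ] C) (hΦ : Function.Injective Φ) {s : Set C}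
    (hs : (Submodule.span ℂ s).topologicalClosure = ⊤) (hsub : s ⊆ Set.range Φ) :
    Function.Surjective Φ := by
  have hclosed : IsClosed (LinearMap.range Φ.toLinearMap : Set C) := by
    rw [LinearMap.coe_range]
    exact (NonUnitalStarAlgHom.isometry Φ hΦ).isClosedEmbedding.isClosed_range
  have hle : (Submodule.span ℂ s).topologicalClosure ≤ LinearMap.range Φ.toLinearMap :=
    Submodule.topologicalClosure_minimal _
      (Submodule.span_le.mpr (by rwa [LinearMap.coe_range])) hclosed
  rw [hs] at hle
  exact fun y => hle (Submodule.mem_top (x := y))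

theorem basic_construction_iso_crossed_product_general
    {B C : Type*} [NormedRing B] [StarRing B] [NormedAlgebra ℂ B]
    [StarModule ℂ B]
    [NormedRing C] [StarRing C] [CStarRing C] [NormedAlgebra ℂ C]
    [StarModule ℂ C] [CompleteSpace C]
    {A : StarSubalgebra ℂ B} (E : CondExp B A)
    {n : ℕ} (x : Fin n → B) (hx : IsQuasiBasis E x)
    (hidx : ∑ i, x i * star (x i) = (2 : B))
    (bc : BasicConstruction E C)
    -- the crossed product D = B ⋊_β ℤ₂ with canonical unitary W
    {D : Type*} [NormedRing D] [StarRing D] [CStarRing D] [NormedAlgebra ℂ D]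
    [StarModule ℂ D] [CompleteSpace D]
    (ι' : B →⋆ₐ[ℂ] D) (hι' : Function.Injective ι')
    (W : D) (hW1 : star W = W) (hW2 : W * W = 1)
    (hWb : ∀ b : B, W * ι' b * W = ι' (2 * E.toFun b - b))
    (hdecomp : ∀ d : D, ∃ b₁ b₂ : B, d = ι' b₁ + ι' b₂ * W)
    (huniq : ∀ b₁ b₂ : B, ι' b₁ + ι' b₂ * W = 0 → b₁ = 0 ∧ b₂ = 0) :
    ∃ θ : C ≃⋆ₐ[ℂ] D,
      (∀ b : B, θ (bc.ι b) = ι' b) ∧ θ bc.e = ((2 : ℂ))⁻¹ • (W + 1) := by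
  let _ : CStarAlgebra C := {}
  let _ : CStarAlgebra D := {}
  have hW : IsImplementingSymmetry ι' E.reflection W :=
    ⟨hW1, hW2, fun b => by rw [CondExp.reflection, ← hWb, mul_assoc _ W, hW2, mul_one]⟩
  have hβ := map_mul_of_mul_map_mul_eq hι' hW2 (β := E.reflection) hWb
  obtain ⟨Φ, hΦι, hΦW⟩ := exists_starAlgHom_of_isImplementingSymmetry hW hdecomp huniq
    (bc.isImplementingSymmetry (E.toFun_mul_of_reflection_mul hβ))
  have hΦe : Φ ((2 : ℂ)⁻¹ • (W + 1)) = bc.e := by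
    rw [map_smul, map_add, map_one, hΦW, sub_add_cancel, two_mul, ← two_smul ℂ, smul_smul,
      inv_mul_cancel₀ two_ne_zero, one_smul]
  have hinj := injective_of_isImplementingSymmetry Φ hdecomp hΦι hΦW
    fun _ _ => bc.eq_zero_of_ι_add_ι_mul_symm_eq_zero hx hidx
  have hsurj := Φ.surjective_of_span_dense hinj bc.dense <| by
    rintro _ ⟨b, c, rfl⟩
    exact ⟨ι' b * ((2 : ℂ)⁻¹ • (W + 1)) * ι' c, by rw [map_mul, map_mul, hΦι, hΦι, hΦe]⟩
  let θ := StarAlgEquiv.ofBijective Φ ⟨hinj, hsurj⟩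
  refine ⟨θ.symm, fun b => ?_, ?_⟩
  · rw [StarAlgEquiv.symm_apply_eq]; exact (hΦι b).symm
  · rw [StarAlgEquiv.symm_apply_eq]; exact hΦe.symm

/-- the basic construction `C*⟨B,e_A⟩` is isomorphic to the crossed product
`B ⋊_β ℤ₂` (presented by an implementing self-adjoint unitary `W` with `Ad(W)|_B = β`,
`β(b) = 2E(b) − b`), via an isomorphism fixing `B` pointwise and sending
`e_A` to `(1/2)(W + 1)`. -/
theorem basic_construction_iso_crossed_product
    {B C : Type*} [NormedRing B] [StarRing B] [CStarRing B] [NormedAlgebra ℂ B]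
    [StarModule ℂ B] [CompleteSpace B]
    [NormedRing C] [StarRing C] [CStarRing C] [NormedAlgebra ℂ C]
    [StarModule ℂ C] [CompleteSpace C]
    {A : StarSubalgebra ℂ B} (E : CondExp B A)
    {n : ℕ} (x : Fin n → B) (hx : IsQuasiBasis E x)
    (hidx : ∑ i, x i * star (x i) = (2 : B))
    (bc : BasicConstruction E C)
    (Et : C →ₗ[ℂ] B)
    (hEt : ∀ b c : B, Et (bc.ι b * bc.e * bc.ι c) = ((2 : ℂ))⁻¹ • (b * c))
    -- the crossed product D = B ⋊_β ℤ₂ with canonical unitary W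
    {D : Type*} [NormedRing D] [StarRing D] [CStarRing D] [NormedAlgebra ℂ D]
    [StarModule ℂ D] [CompleteSpace D]
    (ι' : B →⋆ₐ[ℂ] D) (hι' : Function.Injective ι')
    (W : D) (hW1 : star W = W) (hW2 : W * W = 1)
    (hWb : ∀ b : B, W * ι' b * W = ι' (2 * E.toFun b - b))
    (hdecomp : ∀ d : D, ∃ b₁ b₂ : B, d = ι' b₁ + ι' b₂ * W)
    (huniq : ∀ b₁ b₂ : B, ι' b₁ + ι' b₂ * W = 0 → b₁ = 0 ∧ b₂ = 0) :
    ∃ θ : C ≃⋆ₐ[ℂ] D,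
      (∀ b : B, θ (bc.ι b) = ι' b) ∧ θ bc.e = ((2 : ℂ))⁻¹ • (W + 1) :=
  basic_construction_iso_crossed_product_general E x hx hidx bc ι' hι' W hW1 hW2 hWb hdecomp huniq

end
end

section
/- With X_B = e_A C*⟨B, e_A⟩ (1−e_A) as above, the map x ↦ x^♯ := β̂(x*) defines an involution on X_B, making X_B an involutive A-A-equivalence bimodule: (x^♯)^♯ = x, (a·x·b)^♯ = b*·x^♯·a*, and _A⟨x, y^♯⟩ = ⟨x^♯, y⟩_A. -/
/- Watatani-style conditional expectations, quasi-bases, and the C*-basic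
construction, formalized abstractly. -/

noncomputable section

/-!
Because `β̂` is a *-automorphism exchanging `e_A` and `1 - e_A` and fixing `B`, the map
`x ↦ β̂(x*)` sends `e_A C (1 - e_A)` to `β̂((1 - e_A) x* e_A) = e_A β̂(x*) (1 - e_A)`, and the
bimodule identities are formal consequences. For the inner products, both `_A⟨x, y^♯⟩ e_A` and
`β̂(⟨x^♯, y⟩_A (1 - e_A)) = ⟨x^♯, y⟩_A e_A` equal `x β̂(y)`, and `b ↦ b e_A` is injective on `B`.
-/

section Corner

variable {C F : Type*} [Ring C] [FunLike F C C]

theorem map_one_sub_of_map_eq_one_sub [RingHomClass F C C] (Φ : F) {e : C}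
    (hΦe : Φ e = 1 - e) : Φ (1 - e) = e := by
  rw [map_sub, map_one, hΦe, sub_sub_cancel]

theorem map_star_mem_corner [StarRing C] [RingHomClass F C C] (Φ : F) {e y : C}
    (he : IsSelfAdjoint e) (hΦe : Φ e = 1 - e) (hy : e * y * (1 - e) = y) :
    e * Φ (star y) * (1 - e) = Φ (star y) :=
  calc e * Φ (star y) * (1 - e) = Φ ((1 - e) * star y * e) := by
        rw [map_mul, map_mul, map_one_sub_of_map_eq_one_sub Φ hΦe, hΦe]
    _ = Φ (star (e * y * (1 - e))) := by
        rw [star_mul, star_mul, star_sub, star_one, he.star_eq, mul_assoc]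
    _ = Φ (star y) := by rw [hy]

variable [StarRing C] [StarHomClass F C C]

theorem map_star_map_star_of_involutive {Φ : F} (hΦ : Function.Involutive Φ) (y : C) :
    Φ (star (Φ (star y))) = y := by
  rw [← map_star, star_star, hΦ]

theorem map_star_mul_mul_of_map_eq [MulHomClass F C C] (Φ : F) {p q : C} (hp : Φ p = p)
    (hq : Φ q = q) (y : C) :
    Φ (star (p * y * q)) = star q * Φ (star y) * star p := by
  rw [star_mul, star_mul, map_mul, map_mul, map_star Φ q, map_star Φ p, hp, hq, mul_assoc]

end Corner

namespace BasicConstruction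

variable {B C : Type*} [NormedRing B] [StarRing B] [NormedAlgebra ℂ B] [StarModule ℂ B]
  [NormedRing C] [StarRing C] [NormedAlgebra ℂ C] [StarModule ℂ C]
  {A : StarSubalgebra ℂ B} {E : CondExp B A}

theorem eq_of_ι_mul_e_eq (bc : BasicConstruction E C) {b c : B}
    (h : bc.ι b * bc.e = bc.ι c * bc.e) : b = c :=
  sub_eq_zero.mp <| bc.mul_e_inj _ <| by rw [map_sub, sub_mul, h, sub_self]

end BasicConstruction

theorem corner_involution_general
    {B C : Type*} [NormedRing B] [StarRing B] [NormedAlgebra ℂ B]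
    [StarModule ℂ B]
    [NormedRing C] [StarRing C] [NormedAlgebra ℂ C]
    [StarModule ℂ C]
    {A : StarSubalgebra ℂ B} (E : CondExp B A)
    (bc : BasicConstruction E C)
    (Cn : C → Prop) (hCn : ∀ y, Cn y ↔ bc.e * y * (1 - bc.e) = y)
    -- the inner products of the bimodule X_B
    (lin rin : C → C → B)
    (hlin : ∀ y z, Cn y → Cn z → lin y z ∈ A ∧ bc.ι (lin y z) * bc.e = y * star z)
    (hrin : ∀ y z, Cn y → Cn z → rin y z ∈ A ∧ bc.ι (rin y z) * (1 - bc.e) = star y * z)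
    -- the dual automorphism β̂ of C*⟨B,e_A⟩
    (Φ : C ≃⋆ₐ[ℂ] C)
    (hΦB : ∀ b : B, Φ (bc.ι b) = bc.ι b)
    (hΦe : Φ bc.e = 1 - bc.e)
    (hΦ2 : ∀ y : C, Φ (Φ y) = y) :
    -- x ↦ β̂(x*) maps the corner into itself, conjugate-linearly
    (∀ y, Cn y → Cn (Φ (star y))) ∧
    (∀ (c : ℂ) (y : C), Φ (star (c • y)) = star c • Φ (star y)) ∧
    (∀ y z : C, Φ (star (y + z)) = Φ (star y) + Φ (star z)) ∧
    -- (x^♯)^♯ = x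
    (∀ y, Cn y → Φ (star (Φ (star y))) = y) ∧
    -- (a·x·b)^♯ = b*·x^♯·a*
    (∀ a ∈ A, ∀ b ∈ A, ∀ y, Cn y →
      Φ (star (bc.ι a * y * bc.ι b)) = bc.ι (star b) * Φ (star y) * bc.ι (star a)) ∧
    -- _A⟨x, y^♯⟩ = ⟨x^♯, y⟩_A
    (∀ y z, Cn y → Cn z → lin y (Φ (star z)) = rin (Φ (star y)) z) := by
  have hcorner : ∀ y, Cn y → Cn (Φ (star y)) := fun y hy => (hCn _).mpr <|
    map_star_mem_corner Φ bc.e_star hΦe ((hCn y).mp hy)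
  refine ⟨hcorner, fun c y => by rw [star_smul, map_smul], fun y z => by rw [star_add, map_add],
    fun y _ => map_star_map_star_of_involutive hΦ2 y, ?_, ?_⟩
  · intro a _ b _ y _
    rw [map_star_mul_mul_of_map_eq Φ (hΦB a) (hΦB b), ← map_star, ← map_star]
  · intro y z hy hz
    have hstar : ∀ w, star (Φ (star w)) = Φ w := fun w => by rw [map_star, star_star]
    have hl : bc.ι (lin y (Φ (star z))) * bc.e = y * Φ z := by
      rw [(hlin y _ hy (hcorner z hz)).2, hstar]
    have hr : bc.ι (rin (Φ (star y)) z) * bc.e = y * Φ z := by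
      have h := congrArg Φ (hrin _ z (hcorner y hy) hz).2
      rwa [map_mul, map_mul, hΦB, map_one_sub_of_map_eq_one_sub Φ hΦe, hstar, hΦ2] at h
    exact bc.eq_of_ι_mul_e_eq (hl.trans hr.symm)

/-- `x^♯ := β̂(x*)` is an involution on the corner bimodule
`X_B = e_A C*⟨B,e_A⟩(1−e_A)`, making it an involutive A-A-equivalence bimodule. -/
theorem corner_involution
    {B C : Type*} [NormedRing B] [StarRing B] [CStarRing B] [NormedAlgebra ℂ B]
    [StarModule ℂ B] [CompleteSpace B]
    [NormedRing C] [StarRing C] [CStarRing C] [NormedAlgebra ℂ C]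
    [StarModule ℂ C] [CompleteSpace C]
    {A : StarSubalgebra ℂ B} (E : CondExp B A)
    {n : ℕ} (x : Fin n → B) (hx : IsQuasiBasis E x)
    (hidx : ∑ i, x i * star (x i) = (2 : B))
    (bc : BasicConstruction E C)
    (Et : C →ₗ[ℂ] B)
    (hEt : ∀ b c : B, Et (bc.ι b * bc.e * bc.ι c) = ((2 : ℂ))⁻¹ • (b * c))
    (Cn : C → Prop) (hCn : ∀ y, Cn y ↔ bc.e * y * (1 - bc.e) = y)
    -- the inner products of the bimodule X_B
    (lin rin : C → C → B)
    (hlin : ∀ y z, Cn y → Cn z → lin y z ∈ A ∧ bc.ι (lin y z) * bc.e = y * star z)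
    (hrin : ∀ y z, Cn y → Cn z → rin y z ∈ A ∧ bc.ι (rin y z) * (1 - bc.e) = star y * z)
    -- the dual automorphism β̂ of C*⟨B,e_A⟩
    (Φ : C ≃⋆ₐ[ℂ] C)
    (hΦB : ∀ b : B, Φ (bc.ι b) = bc.ι b)
    (hΦe : Φ bc.e = 1 - bc.e)
    (hΦ2 : ∀ y : C, Φ (Φ y) = y) :
    -- x ↦ β̂(x*) maps the corner into itself, conjugate-linearly
    (∀ y, Cn y → Cn (Φ (star y))) ∧
    (∀ (c : ℂ) (y : C), Φ (star (c • y)) = star c • Φ (star y)) ∧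
    (∀ y z : C, Φ (star (y + z)) = Φ (star y) + Φ (star z)) ∧
    -- (x^♯)^♯ = x
    (∀ y, Cn y → Φ (star (Φ (star y))) = y) ∧
    -- (a·x·b)^♯ = b*·x^♯·a*
    (∀ a ∈ A, ∀ b ∈ A, ∀ y, Cn y →
      Φ (star (bc.ι a * y * bc.ι b)) = bc.ι (star b) * Φ (star y) * bc.ι (star a)) ∧
    -- _A⟨x, y^♯⟩ = ⟨x^♯, y⟩_A
    (∀ y z, Cn y → Cn z → lin y (Φ (star z)) = rin (Φ (star y)) z) :=
  corner_involution_general E bc Cn hCn lin rin hlin hrin Φ hΦB hΦe hΦ2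

end
end
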